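/- arXiv:1308.4897 — 6 statements merged into one kernel-verified Lean document; each statement's English description precedes it below -/
import Mathlib

section
/- If f and g are nonnegative integrable functions on the real line, each radially symmetric (even) and nonincreasing on [0,∞), then their convolution f*g is also even and nonincreasing on [0,∞). -/
open MeasureTheory Set

lemma even_anti_le (f : ℝ → ℝ) (hfe : ∀ x, f (-x) = f x) (hfa : AntitoneOn f (Ici 0))
    {u v : ℝ} (h : |u| ≤ |v|) : f v ≤ f u := by
  have habs : ∀ z : ℝ, f |z| = f z := by
    intro z
    rcases abs_cases z with ⟨h1, _⟩ | ⟨h1, _⟩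
    · rw [h1]
    · rw [h1, hfe]
  calc f v = f |v| := (habs v).symm
    _ ≤ f |u| := hfa (abs_nonneg u) (abs_nonneg v) h
    _ = f u := habs u

theorem conv_even_antitone
    (f g : ℝ → ℝ)
    (hf0 : ∀ x, 0 ≤ f x) (hg0 : ∀ x, 0 ≤ g x)
    (hfi : Integrable f) (hgi : Integrable g)
    (hfe : ∀ x, f (-x) = f x) (hge : ∀ x, g (-x) = g x)
    (hfa : AntitoneOn f (Ici 0)) (hga : AntitoneOn g (Ici 0)) :
    (∀ x, (∫ y, f (-x - y) * g y) = ∫ y, f (x - y) * g y) ∧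
    AntitoneOn (fun x => ∫ y, f (x - y) * g y) (Ici 0) := by
  -- bound on f
  have hfb : ∀ z : ℝ, f z ≤ f 0 := fun z =>
    even_anti_le f hfe hfa (by simp)
  -- integrability of y ↦ f (c - y) * g y for any c
  have hint : ∀ c : ℝ, Integrable (fun y => f (c - y) * g y) := by
    intro c
    have h1 : Integrable (fun y => f (c - y)) := hfi.comp_sub_left c
    refine Integrable.mono' (hgi.const_mul (f 0))
      (h1.aestronglyMeasurable.mul hgi.aestronglyMeasurable) ?_
    filter_upwards with y
    rw [Real.norm_eq_abs, abs_mul, abs_of_nonneg (hf0 _), abs_of_nonneg (hg0 _)]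
    exact mul_le_mul_of_nonneg_right (hfb _) (hg0 y)
  constructor
  · intro x
    have h1 : ∀ y : ℝ, f (-x - y) * g y = f (x + y) * g y := by
      intro y
      rw [← hfe (x + y)]; ring_nf
    simp_rw [h1]
    calc (∫ y, f (x + y) * g y) = ∫ y, f (x + -y) * g (-y) := by
            rw [integral_neg_eq_self (fun y => f (x + y) * g y) volume]
      _ = ∫ y, f (x - y) * g y := by
            congr 1; funext y; rw [hge, sub_eq_add_neg]
  · intro a ha b hb hab
    simp only
    rw [← sub_nonneg, ← integral_sub (hint a) (hint b)]
    set m : ℝ := (a + b) / 2 with hm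
    have hm0 : (0:ℝ) ≤ m := by simp only [mem_Ici] at ha hb; linarith
    set D : ℝ → ℝ := fun y => f (a - y) * g y - f (b - y) * g y with hD
    have hDi : Integrable D := (hint a).sub (hint b)
    -- reflection identity on Iic m
    have hrefl : (∫ y in Iic m, D y) = ∫ y in Ici m, D (a + b - y) := by
      have h1 : (∫ y, (Iic m).indicator D y) = ∫ y, (Iic m).indicator D (a + b - y) := by
        rw [integral_sub_left_eq_self ((Iic m).indicator D) volume (a + b)]
      have h2 : ∀ y : ℝ, (Iic m).indicator D (a + b - y)
          = (Ici m).indicator (fun y => D (a + b - y)) y := by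
        intro y
        by_cases hy : y ∈ Ici m
        · rw [indicator_of_mem hy, indicator_of_mem]
          simp only [mem_Iic]
          simp only [mem_Ici] at hy
          linarith [hm]
        · rw [indicator_of_notMem hy, indicator_of_notMem]
          simp only [mem_Iic]
          simp only [mem_Ici, not_le] at hy ⊢
          rw [hm] at hy ⊢
          linarith
      rw [integral_indicator measurableSet_Iic] at h1
      simp_rw [h2] at h1
      rw [integral_indicator measurableSet_Ici] at h1
      exact h1
    have hsplit : (∫ y, D y) = (∫ y in Iic m, D y) + ∫ y in Ioi m, D y :=
      (intervalIntegral.integral_Iic_add_Ioi hDi.integrableOn hDi.integrableOn).symm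
    rw [hsplit, hrefl, ← integral_Ici_eq_integral_Ioi]
    have hDrefli : IntegrableOn (fun y => D (a + b - y)) (Ici m) := by
      have : Integrable (fun y => D (a + b - y)) := hDi.comp_sub_left (a + b)
      exact this.integrableOn
    rw [← integral_add hDrefli hDi.integrableOn]
    apply setIntegral_nonneg measurableSet_Ici
    intro y hy
    simp only [mem_Ici] at hy
    have hy0 : (0:ℝ) ≤ y := le_trans hm0 hy
    -- D (a+b-y) + D y = (f (a - y) - f (b - y)) * (g y - g (a + b - y))
    have key : D (a + b - y) + D y
        = (f (a - y) - f (b - y)) * (g y - g (a + b - y)) := by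
      have e1 : a - (a + b - y) = -(b - y) := by ring
      have e2 : b - (a + b - y) = -(a - y) := by ring
      simp only [hD, e1, e2, hfe]
      ring
    rw [key]
    have h1 : f (a - y) ≤ f (b - y) := by
      apply even_anti_le f hfe hfa
      rw [abs_sub_comm b y, abs_sub_comm a y]
      rw [abs_of_nonneg (by rw [hm] at hy; linarith : (0:ℝ) ≤ y - a)]
      have : |y - b| ≤ y - a := by
        rw [abs_le]; constructor <;> [skip; skip] <;> (rw [hm] at hy; linarith)
      linarith [this]
    have h2 : g y ≤ g (a + b - y) := by
      apply even_anti_le g hge hga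
      rw [abs_of_nonneg hy0]
      rw [abs_le]; constructor <;> (rw [hm] at hy; linarith)
    rw [← neg_mul_neg]; exact mul_nonneg (by linarith) (by linarith)
end

section
/- For each n ∈ ℕ, the problem φ_n(x) = ∫_0^{n+d} J(x-y) φ_n(y) dy for 0 ≤ x ≤ n, φ_n(x) = 0 for -d < x < 0, φ_n(x) = x for x > n, has a solution φ_n which satisfies 0 ≤ φ_n(x) ≤ x + d for all 0 ≤ x ≤ n. -/
open MeasureTheory Set intervalIntegral

set_option maxHeartbeats 1000000
open scoped BoundedContinuousFunction

theorem approx_stationary_exists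
    (d : ℝ) (hd : 0 < d)
    (J : ℝ → ℝ) (hJsm : ContDiff ℝ (⊤ : ℕ∞) J) (hJ0 : ∀ z, 0 ≤ J z)
    (hJe : ∀ z, J (-z) = J z)
    (hJs : ∀ z, z ∉ Ioo (-d) d → J z = 0)
    (hJ1 : ∫ z, J z = 1)
    (n : ℕ) :
    ∃ φ : ℝ → ℝ, ContinuousOn φ (Icc 0 (n : ℝ)) ∧
      (∀ x ∈ Icc (0 : ℝ) (n : ℝ), φ x = ∫ y in (0 : ℝ)..((n : ℝ) + d), J (x - y) * φ y) ∧
      (∀ x ∈ Ioo (-d) (0 : ℝ), φ x = 0) ∧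
      (∀ x : ℝ, (n : ℝ) < x → φ x = x) ∧
      (∀ x ∈ Icc (0 : ℝ) (n : ℝ), 0 ≤ φ x ∧ φ x ≤ x + d) := by
  have hJcont : Continuous J := hJsm.continuous
  have hn0 : (0:ℝ) ≤ (n:ℝ) := Nat.cast_nonneg n
  have hnnd : (n:ℝ) ≤ (n:ℝ) + d := by linarith
  have hJc : HasCompactSupport J :=
    HasCompactSupport.intro isCompact_Icc fun z hz => hJs z fun hin => hz ⟨hin.1.le, hin.2.le⟩
  -- the frequency constant
  set c : ℝ := 1 / ((n:ℝ) + 4*d + 2) with hc_def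
  have hc : 0 < c := by positivity
  have hkey_c : c * ((n:ℝ)/2 + 2*d) ≤ 1/2 := by
    rw [hc_def, div_mul_eq_mul_div, one_mul, div_le_div_iff₀ (by positivity) two_pos]
    linarith
  have hpi : (3:ℝ) < Real.pi := Real.pi_gt_three
  set m : ℝ := Real.cos (1/2) with hm_def
  have hm : 0 < m := Real.cos_pos_of_mem_Ioo ⟨by nlinarith, by nlinarith⟩
  have hcos_ge : ∀ t : ℝ, |t| ≤ 1/2 → m ≤ Real.cos t := by
    intro t ht
    rw [← Real.cos_abs t]
    exact Real.cos_le_cos_of_nonneg_of_le_pi (abs_nonneg t) (by nlinarith) ht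
  have hcos_pos : ∀ t : ℝ, |t| ≤ 1/2 → 0 < Real.cos t := fun t ht =>
    lt_of_lt_of_le hm (hcos_ge t ht)
  have harg : ∀ u : ℝ, -(2*d) ≤ u → u ≤ (n:ℝ) + 2*d → |c * (u - (n:ℝ)/2)| ≤ 1/2 := by
    intro u h1 h2
    rw [abs_mul, abs_of_pos hc]
    have habs : |u - (n:ℝ)/2| ≤ (n:ℝ)/2 + 2*d := by
      rw [abs_le]; constructor <;> linarith
    calc c * |u - (n:ℝ)/2| ≤ c * ((n:ℝ)/2 + 2*d) :=
          mul_le_mul_of_nonneg_left habs hc.le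
      _ ≤ 1/2 := hkey_c
  -- the weight function
  set p : ℝ → ℝ := fun x => max (-d) (min x ((n:ℝ)+d)) with hp_def
  have hp_mem : ∀ x, p x ∈ Icc (-d) ((n:ℝ)+d) := fun x =>
    ⟨le_max_left _ _, max_le (by linarith) (min_le_right _ _)⟩
  have hp_id : ∀ x ∈ Icc (-d) ((n:ℝ)+d), p x = x := by
    intro x hx
    rw [hp_def]
    simp only
    rw [min_eq_left hx.2, max_eq_right hx.1]
  set w : ℝ → ℝ := fun x => Real.cos (c * (p x - (n:ℝ)/2)) with hw_def
  have hw_arg : ∀ x, |c * (p x - (n:ℝ)/2)| ≤ 1/2 := fun x =>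
    harg _ (by linarith [(hp_mem x).1]) (by linarith [(hp_mem x).2])
  have hwm : ∀ x, m ≤ w x := fun x => hcos_ge _ (hw_arg x)
  have hw0 : ∀ x, 0 < w x := fun x => lt_of_lt_of_le hm (hwm x)
  have hw1 : ∀ x, w x ≤ 1 := fun x => Real.cos_le_one _
  have hwcont : Continuous w := by
    apply Real.continuous_cos.comp
    apply continuous_const.mul
    exact ((continuous_const.max (continuous_id.min continuous_const))).sub continuous_const
  have hweq : ∀ x ∈ Icc (-d) ((n:ℝ)+d), w x = Real.cos (c * (x - (n:ℝ)/2)) := by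
    intro x hx
    rw [hw_def]
    simp only
    rw [hp_id x hx]
  -- integrability helpers
  have hIntJ : ∀ h : ℝ → ℝ, Continuous h → Integrable (fun z => J z * h z) := by
    intro h hh
    exact (hJcont.mul hh).integrable_of_hasCompactSupport (hJc.mul_right)
  have hIntK : ∀ (x : ℝ) (h : ℝ → ℝ), Continuous h → Integrable (fun y => J (x - y) * h y) := by
    intro x h hh
    apply Continuous.integrable_of_hasCompactSupport
      ((hJcont.comp (continuous_const.sub continuous_id)).mul hh)
    apply HasCompactSupport.intro (isCompact_Icc (a := x - d) (b := x + d))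
    intro y hy
    have hzero : J (x - y) = 0 := by
      apply hJs
      intro hin
      exact hy ⟨by linarith [hin.2], by linarith [hin.1]⟩
    simp [hzero]
  -- odd functions integrate to zero against J
  have hOdd : ∀ h : ℝ → ℝ, (∀ z, h (-z) = - h z) → ∫ z, J z * h z = 0 := by
    intro h hodd
    have h1 : ∫ z, J (-z) * h (-z) = ∫ z, J z * h z :=
      integral_neg_eq_self (fun z => J z * h z) volume
    simp only [hJe, hodd, mul_neg] at h1
    rw [MeasureTheory.integral_neg] at h1
    linarith
  have hJid : ∫ z, J z * z = 0 := hOdd _ (fun z => rfl)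
  have hJsin : ∫ z, J z * Real.sin (c * z) = 0 := hOdd _ (fun z => by
    rw [mul_neg, Real.sin_neg])
  have hJ1' : ∫ z, J z * 1 = 1 := by simpa using hJ1
  have hcos_cont : Continuous fun z : ℝ => Real.cos (c * z) :=
    Real.continuous_cos.comp (continuous_const.mul continuous_id)
  have hsin_cont : Continuous fun z : ℝ => Real.sin (c * z) :=
    Real.continuous_sin.comp (continuous_const.mul continuous_id)
  set θ : ℝ := ∫ z, J z * Real.cos (c * z) with hθ_def
  have hczd : ∀ z : ℝ, J z ≠ 0 → |c * z| ≤ 1/2 := by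
    intro z hz
    have hzIoo : z ∈ Ioo (-d) d := by
      by_contra h; exact hz (hJs z h)
    rw [abs_mul, abs_of_pos hc]
    have habs : |z| ≤ d := by rw [abs_le]; exact ⟨hzIoo.1.le, hzIoo.2.le⟩
    calc c * |z| ≤ c * ((n:ℝ)/2 + 2*d) := by
          apply mul_le_mul_of_nonneg_left _ hc.le
          linarith
      _ ≤ 1/2 := hkey_c
  have hθnn : 0 ≤ θ := by
    rw [hθ_def]
    apply MeasureTheory.integral_nonneg
    intro z
    by_cases hz : J z = 0
    · simp [hz]
    · exact mul_nonneg (hJ0 z) (hcos_pos _ (hczd z hz)).le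
  have hθlt : θ < 1 := by
    have hsub : ∫ z, (J z * 1 - J z * Real.cos (c*z)) = 1 - θ := by
      rw [integral_sub (hIntJ _ continuous_const) (hIntJ _ hcos_cont), hJ1', hθ_def]
    obtain ⟨z1, hz1⟩ : ∃ z, J z ≠ 0 := by
      by_contra h
      push_neg at h
      rw [show J = fun _ => (0:ℝ) from funext h] at hJ1
      simp at hJ1
    have hz1pos : 0 < J z1 := lt_of_le_of_ne (hJ0 z1) (Ne.symm hz1)
    have hU : IsOpen {z : ℝ | 0 < J z} := isOpen_lt continuous_const hJcont
    obtain ⟨ε, hε, hball⟩ := Metric.isOpen_iff.1 hU z1 hz1pos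
    obtain ⟨z0, hz0pos, hz0ne⟩ : ∃ z0 : ℝ, 0 < J z0 ∧ z0 ≠ 0 := by
      by_cases hcase : z1 + ε/2 = 0
      · refine ⟨z1 - ε/2, hball ?_, ?_⟩
        · rw [Metric.mem_ball, Real.dist_eq]
          rw [show z1 - ε/2 - z1 = -(ε/2) by ring, abs_neg, abs_of_pos (by linarith)]
          linarith
        · intro h0
          apply absurd hcase
          intro h
          nlinarith [h0, h]
      · refine ⟨z1 + ε/2, hball ?_, hcase⟩
        rw [Metric.mem_ball, Real.dist_eq]
        rw [show z1 + ε/2 - z1 = ε/2 by ring, abs_of_pos (by linarith)]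
        linarith
    have hcoslt : Real.cos (c * z0) < 1 := by
      have h2 : 0 < |c * z0| := abs_pos.2 (mul_ne_zero hc.ne' hz0ne)
      calc Real.cos (c*z0) = Real.cos |c*z0| := (Real.cos_abs _).symm
        _ < Real.cos 0 := Real.cos_lt_cos_of_nonneg_of_le_pi le_rfl
            (by nlinarith [hczd z0 (ne_of_gt hz0pos)]) h2
        _ = 1 := Real.cos_zero
    have hfnn : ∀ z, 0 ≤ J z * 1 - J z * Real.cos (c*z) := by
      intro z
      nlinarith [hJ0 z, Real.cos_le_one (c*z)]
    have hfint : Integrable (fun z => J z * 1 - J z * Real.cos (c*z)) :=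
      (hIntJ _ continuous_const).sub (hIntJ _ hcos_cont)
    have hfcont : Continuous (fun z => J z * 1 - J z * Real.cos (c*z)) :=
      (hJcont.mul continuous_const).sub (hJcont.mul hcos_cont)
    have hpos : 0 < ∫ z, (J z * 1 - J z * Real.cos (c*z)) := by
      rw [integral_pos_iff_support_of_nonneg hfnn hfint]
      have hopen : IsOpen {z : ℝ | 0 < J z * 1 - J z * Real.cos (c*z)} :=
        isOpen_lt continuous_const hfcont
      have hmemz : z0 ∈ {z : ℝ | 0 < J z * 1 - J z * Real.cos (c*z)} := by
        simp only [mem_setOf_eq, mul_one]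
        nlinarith
      calc (0:ENNReal) < volume {z : ℝ | 0 < J z * 1 - J z * Real.cos (c*z)} :=
            hopen.measure_pos volume ⟨z0, hmemz⟩
        _ ≤ volume (Function.support fun z => J z * 1 - J z * Real.cos (c*z)) :=
            measure_mono (fun z hz => ne_of_gt hz)
    rw [hsub] at hpos
    linarith
  -- convolution identities
  have hConv : ∀ (h : ℝ → ℝ) (x : ℝ), ∫ y, J (x - y) * h y = ∫ z, J z * h (x - z) := by
    intro h x
    have h1 := integral_sub_left_eq_self (fun z => J z * h (x - z)) volume x
    simpa using h1
  have hMass : ∀ x : ℝ, ∫ y, J (x - y) = 1 := by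
    intro x
    have h1 := hConv (fun _ => 1) x
    simpa [hJ1] using h1
  have hCosId : ∀ x : ℝ, ∫ y, J (x - y) * Real.cos (c * (y - (n:ℝ)/2))
      = θ * Real.cos (c * (x - (n:ℝ)/2)) := by
    intro x
    rw [hConv]
    have hrw : ∀ z : ℝ, J z * Real.cos (c * ((x - z) - (n:ℝ)/2))
        = Real.cos (c * (x - (n:ℝ)/2)) * (J z * Real.cos (c * z))
          + Real.sin (c * (x - (n:ℝ)/2)) * (J z * Real.sin (c * z)) := by
      intro z
      rw [show c * ((x - z) - (n:ℝ)/2) = c * (x - (n:ℝ)/2) - c * z by ring, Real.cos_sub]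
      ring
    simp_rw [hrw]
    rw [integral_add ((hIntJ _ hcos_cont).const_mul _) ((hIntJ _ hsin_cont).const_mul _),
      MeasureTheory.integral_const_mul, MeasureTheory.integral_const_mul, hJsin, ← hθ_def]
    ring
  have hLinId : ∀ x : ℝ, ∫ y, J (x - y) * (y + d) = x + d := by
    intro x
    rw [hConv]
    have hrw : ∀ z : ℝ, J z * ((x - z) + d) = (x + d) * (J z * 1) - J z * z := by
      intro z; ring
    simp_rw [hrw]
    rw [integral_sub ((hIntJ _ continuous_const).const_mul _) (hIntJ _ continuous_id'),
      MeasureTheory.integral_const_mul, hJ1', hJid]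
    ring
  -- interval integral bridging
  have hIleInt : ∀ (x a b : ℝ), a ≤ b → ∀ (h : ℝ → ℝ), Continuous h →
      (∀ y, 0 ≤ J (x - y) * h y) →
      ∫ y in a..b, J (x - y) * h y ≤ ∫ y, J (x - y) * h y := by
    intro x a b hab h hh hnn
    rw [integral_of_le hab]
    exact setIntegral_le_integral (hIntK x h hh) (ae_of_all _ hnn)
  -- continuity of parametric interval integrals via convolution
  have hContConv : ∀ (a b : ℝ), a ≤ b → ∀ (h : ℝ → ℝ), Continuous h →
      Continuous (fun x => ∫ y in a..b, J (x - y) * h y) := by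
    intro a b hab h hh
    set g : ℝ → ℝ := (Ioc a b).indicator h with hg_def
    have hgint : Integrable g :=
      IntegrableOn.integrable_indicator
        ((hh.integrableOn_Icc).mono_set Ioc_subset_Icc_self) measurableSet_Ioc
    have hkey : (fun x => ∫ y in a..b, J (x - y) * h y)
        = convolution J g (ContinuousLinearMap.lsmul ℝ ℝ) volume := by
      funext x
      rw [convolution_def]
      simp only [ContinuousLinearMap.lsmul_apply, smul_eq_mul]
      rw [← hConv g x, integral_of_le hab, ← MeasureTheory.integral_indicator measurableSet_Ioc]
      congr 1
      funext y
      by_cases hy : y ∈ Ioc a b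
      · simp [hg_def, indicator_of_mem hy]
      · simp [hg_def, indicator_of_notMem hy]
    rw [hkey]
    exact hJc.continuous_convolution_left _ hJcont hgint.locallyIntegrable
  -- kernel mass bound
  have hMassLe : ∀ (x a b : ℝ), a ≤ b → ∫ y in a..b, J (x - y) ≤ 1 := by
    intro x a b hab
    have h1 : ∫ y in a..b, J (x - y) ≤ ∫ y, J (x - y) := by
      rw [integral_of_le hab]
      exact setIntegral_le_integral (by simpa using hIntK x (fun _ => 1) continuous_const)
        (ae_of_all _ fun y => hJ0 _)
    rw [hMass x] at h1
    exact h1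
  -- generic abs bound for the operator pieces
  have hTabs : ∀ (x a b : ℝ), a ≤ b → ∀ (h : ℝ → ℝ), Continuous h → ∀ M : ℝ, 0 ≤ M →
      (∀ y ∈ Icc a b, |h y| ≤ M) → |∫ y in a..b, J (x - y) * h y| ≤ M := by
    intro x a b hab h hh M hM hMb
    have hker : Continuous fun y : ℝ => J (x - y) :=
      hJcont.comp (continuous_const.sub continuous_id)
    have hcont : Continuous fun y => J (x - y) * h y := hker.mul hh
    calc |∫ y in a..b, J (x - y) * h y| ≤ ∫ y in a..b, |J (x - y) * h y| :=
          intervalIntegral.abs_integral_le_integral_abs hab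
      _ ≤ ∫ y in a..b, J (x - y) * M := by
          apply integral_mono_on hab (hcont.abs.intervalIntegrable _ _)
            ((hker.mul continuous_const).intervalIntegrable _ _)
          intro y hy
          rw [abs_mul, abs_of_nonneg (hJ0 _)]
          exact mul_le_mul_of_nonneg_left (hMb y hy) (hJ0 _)
      _ = (∫ y in a..b, J (x - y)) * M := by rw [← intervalIntegral.integral_mul_const]
      _ ≤ 1 * M := mul_le_mul_of_nonneg_right (hMassLe x a b hab) hM
      _ = M := one_mul M
  -- the operator
  set Tf : (ℝ → ℝ) → ℝ → ℝ := fun φ x =>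
    (∫ y in (0:ℝ)..(n:ℝ), J (x - y) * φ y) + ∫ y in (n:ℝ)..((n:ℝ)+d), J (x - y) * y
    with hTf_def
  have hTcont : ∀ φ : ℝ → ℝ, Continuous φ → Continuous (Tf φ) := by
    intro φ hφ
    rw [hTf_def]
    exact (hContConv 0 n hn0 φ hφ).add (hContConv n ((n:ℝ)+d) hnnd (fun y => y) continuous_id')
  have hφψcont : ∀ ψ : ℝ →ᵇ ℝ, Continuous (fun y => w y * ψ y) := fun ψ =>
    hwcont.mul ψ.continuous
  have hFb : ∀ (ψ : ℝ →ᵇ ℝ) (x : ℝ),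
      |Tf (fun y => w y * ψ y) x / w x| ≤ (‖ψ‖ + ((n:ℝ) + d)) / m := by
    intro ψ x
    have h1 : |∫ y in (0:ℝ)..(n:ℝ), J (x - y) * (w y * ψ y)| ≤ ‖ψ‖ := by
      apply hTabs x 0 n hn0 _ (hφψcont ψ) ‖ψ‖ (norm_nonneg ψ)
      intro y hy
      rw [abs_mul]
      have hb := ψ.norm_coe_le_norm y
      rw [Real.norm_eq_abs] at hb
      calc |w y| * |ψ y| ≤ 1 * ‖ψ‖ :=
            mul_le_mul (by rw [abs_of_pos (hw0 y)]; exact hw1 y) hb (abs_nonneg _) one_pos.le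
        _ = ‖ψ‖ := one_mul _
    have h2 : |∫ y in (n:ℝ)..((n:ℝ)+d), J (x - y) * y| ≤ (n:ℝ) + d := by
      apply hTabs x n ((n:ℝ)+d) hnnd _ continuous_id' ((n:ℝ)+d) (by linarith)
      intro y hy
      rw [abs_of_nonneg (le_trans hn0 hy.1)]
      exact hy.2
    have h3 : |Tf (fun y => w y * ψ y) x| ≤ ‖ψ‖ + ((n:ℝ)+d) := by
      rw [hTf_def]
      exact le_trans (abs_add_le _ _) (add_le_add h1 h2)
    rw [abs_div, abs_of_pos (hw0 x)]
    have hnum : (0:ℝ) ≤ ‖ψ‖ + ((n:ℝ) + d) := add_nonneg (norm_nonneg ψ) (by linarith)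
    exact div_le_div₀ hnum h3 hm (hwm x)
  set S : (ℝ →ᵇ ℝ) → (ℝ →ᵇ ℝ) := fun ψ => BoundedContinuousFunction.ofNormedAddCommGroup
      (fun x => Tf (fun y => w y * ψ y) x / w x)
      ((hTcont _ (hφψcont ψ)).div hwcont fun x => (hw0 x).ne')
      ((‖ψ‖ + ((n:ℝ) + d)) / m)
      (fun x => by rw [Real.norm_eq_abs]; exact hFb ψ x) with hS_def
  have hSapp : ∀ (ψ : ℝ →ᵇ ℝ) (x : ℝ), S ψ x = Tf (fun y => w y * ψ y) x / w x :=
    fun ψ x => rfl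
  -- the key contraction inequality
  have hKey : ∀ x : ℝ, ∫ y in (0:ℝ)..(n:ℝ), J (x - y) * w y ≤ θ * w x := by
    intro x
    by_cases hx : x ∈ Icc (-d) ((n:ℝ)+d)
    · have e1 : ∫ y in (0:ℝ)..(n:ℝ), J (x - y) * w y
          = ∫ y in (0:ℝ)..(n:ℝ), J (x - y) * Real.cos (c * (y - (n:ℝ)/2)) := by
        apply intervalIntegral.integral_congr
        intro y hy
        rw [uIcc_of_le hn0] at hy
        show J (x - y) * w y = J (x - y) * Real.cos (c * (y - (n:ℝ)/2))
        rw [hweq y ⟨by linarith [hy.1], by linarith [hy.2]⟩]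
      have hnn : ∀ y, 0 ≤ J (x - y) * Real.cos (c * (y - (n:ℝ)/2)) := by
        intro y
        by_cases hJxy : J (x - y) = 0
        · simp [hJxy]
        · have hxy : x - y ∈ Ioo (-d) d := by
            by_contra h; exact hJxy (hJs _ h)
          have hy1 : -(2*d) ≤ y := by linarith [hxy.2, hx.1]
          have hy2 : y ≤ (n:ℝ) + 2*d := by linarith [hxy.1, hx.2]
          exact mul_nonneg (hJ0 _) (hcos_pos _ (harg y hy1 hy2)).le
      rw [e1, hweq x hx]
      calc ∫ y in (0:ℝ)..(n:ℝ), J (x - y) * Real.cos (c * (y - (n:ℝ)/2))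
          ≤ ∫ y, J (x - y) * Real.cos (c * (y - (n:ℝ)/2)) :=
            hIleInt x 0 n hn0 _ (Real.continuous_cos.comp
              (continuous_const.mul (continuous_id'.sub continuous_const))) hnn
        _ = θ * Real.cos (c * (x - (n:ℝ)/2)) := hCosId x
    · have e0 : ∫ y in (0:ℝ)..(n:ℝ), J (x - y) * w y = 0 := by
        have hzero : EqOn (fun y => J (x - y) * w y) (fun _ => (0:ℝ)) (uIcc (0:ℝ) (n:ℝ)) := by
          intro y hy
          rw [uIcc_of_le hn0] at hy
          have hz : J (x - y) = 0 := by
            apply hJs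
            intro hin
            simp only [mem_Icc, not_and_or, not_le] at hx
            rcases hx with h | h
            · have := hin.1; linarith [hy.1]
            · have := hin.2; linarith [hy.2]
          simp [hz]
        rw [intervalIntegral.integral_congr hzero]
        exact intervalIntegral.integral_zero
      rw [e0]
      exact mul_nonneg hθnn (hw0 x).le
  -- contraction estimate
  have hS_dist : ∀ ψ₁ ψ₂ : ℝ →ᵇ ℝ, ∀ x, |S ψ₁ x - S ψ₂ x| ≤ θ * dist ψ₁ ψ₂ := by
    intro ψ₁ ψ₂ x
    have hDnn : (0:ℝ) ≤ dist ψ₁ ψ₂ := dist_nonneg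
    have hker : Continuous fun y : ℝ => J (x - y) :=
      hJcont.comp (continuous_const.sub continuous_id)
    have hint1 : IntervalIntegrable (fun y => J (x - y) * (w y * ψ₁ y)) volume 0 n :=
      (hker.mul (hφψcont ψ₁)).intervalIntegrable _ _
    have hint2 : IntervalIntegrable (fun y => J (x - y) * (w y * ψ₂ y)) volume 0 n :=
      (hker.mul (hφψcont ψ₂)).intervalIntegrable _ _
    have hdiff : S ψ₁ x - S ψ₂ x =
        (∫ y in (0:ℝ)..(n:ℝ), (J (x - y) * (w y * ψ₁ y) - J (x - y) * (w y * ψ₂ y))) / w x := by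
      rw [hSapp, hSapp, div_sub_div_same]
      congr 1
      rw [hTf_def]
      simp only
      rw [intervalIntegral.integral_sub hint1 hint2]
      ring
    rw [hdiff, abs_div, abs_of_pos (hw0 x)]
    have habs : |∫ y in (0:ℝ)..(n:ℝ), (J (x - y) * (w y * ψ₁ y) - J (x - y) * (w y * ψ₂ y))|
        ≤ θ * w x * dist ψ₁ ψ₂ := by
      calc |∫ y in (0:ℝ)..(n:ℝ), (J (x - y) * (w y * ψ₁ y) - J (x - y) * (w y * ψ₂ y))|
          ≤ ∫ y in (0:ℝ)..(n:ℝ), |J (x - y) * (w y * ψ₁ y) - J (x - y) * (w y * ψ₂ y)| :=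
            intervalIntegral.abs_integral_le_integral_abs hn0
        _ ≤ ∫ y in (0:ℝ)..(n:ℝ), J (x - y) * w y * dist ψ₁ ψ₂ := by
            apply integral_mono_on hn0
              (((hker.mul (hφψcont ψ₁)).sub (hker.mul (hφψcont ψ₂))).abs.intervalIntegrable _ _)
              (((hker.mul hwcont).mul continuous_const).intervalIntegrable _ _)
            intro y hy
            have hb := BoundedContinuousFunction.dist_coe_le_dist (f := ψ₁) (g := ψ₂) y
            rw [Real.dist_eq] at hb
            have : J (x - y) * (w y * ψ₁ y) - J (x - y) * (w y * ψ₂ y)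
                = J (x - y) * w y * (ψ₁ y - ψ₂ y) := by ring
            show |J (x - y) * (w y * ψ₁ y) - J (x - y) * (w y * ψ₂ y)| ≤ J (x - y) * w y * dist ψ₁ ψ₂
            rw [this, abs_mul, abs_of_nonneg (mul_nonneg (hJ0 _) (hw0 y).le)]
            exact mul_le_mul_of_nonneg_left hb (mul_nonneg (hJ0 _) (hw0 y).le)
        _ = (∫ y in (0:ℝ)..(n:ℝ), J (x - y) * w y) * dist ψ₁ ψ₂ := by
            rw [← intervalIntegral.integral_mul_const]
        _ ≤ θ * w x * dist ψ₁ ψ₂ := mul_le_mul_of_nonneg_right (hKey x) hDnn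
    have hdivle : |∫ y in (0:ℝ)..(n:ℝ), (J (x - y) * (w y * ψ₁ y) - J (x - y) * (w y * ψ₂ y))| / w x
        ≤ (θ * w x * dist ψ₁ ψ₂) / w x := (div_le_div_iff_of_pos_right (hw0 x)).2 habs
    have heq : (θ * w x * dist ψ₁ ψ₂) / w x = θ * dist ψ₁ ψ₂ := by
      rw [div_eq_iff (hw0 x).ne']
      ring
    rw [heq] at hdivle
    exact hdivle
  have hContr : ContractingWith (Real.toNNReal θ) S := by
    constructor
    · exact_mod_cast Real.toNNReal_lt_one.2 hθlt
    · apply LipschitzWith.of_dist_le_mul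
      intro ψ₁ ψ₂
      rw [BoundedContinuousFunction.dist_le
          (mul_nonneg (NNReal.coe_nonneg _) dist_nonneg)]
      intro x
      rw [Real.dist_eq]
      calc |S ψ₁ x - S ψ₂ x| ≤ θ * dist ψ₁ ψ₂ := hS_dist ψ₁ ψ₂ x
        _ = (Real.toNNReal θ : ℝ) * dist ψ₁ ψ₂ := by rw [Real.coe_toNNReal θ hθnn]
  -- invariance of the order bounds
  have hTK : ∀ φ : ℝ → ℝ, Continuous φ → (∀ y ∈ Icc (0:ℝ) (n:ℝ), 0 ≤ φ y ∧ φ y ≤ y + d) →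
      ∀ x ∈ Icc (0:ℝ) (n:ℝ), 0 ≤ Tf φ x ∧ Tf φ x ≤ x + d := by
    intro φ hφc hφb x hx
    have hker : Continuous fun y : ℝ => J (x - y) :=
      hJcont.comp (continuous_const.sub continuous_id)
    constructor
    · rw [hTf_def]
      apply add_nonneg
      · apply intervalIntegral.integral_nonneg hn0
        intro u hu
        exact mul_nonneg (hJ0 _) (hφb u hu).1
      · apply intervalIntegral.integral_nonneg hnnd
        intro u hu
        exact mul_nonneg (hJ0 _) (le_trans hn0 hu.1)
    · have h1 : (∫ y in (0:ℝ)..(n:ℝ), J (x - y) * φ y)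
          ≤ ∫ y in (0:ℝ)..(n:ℝ), J (x - y) * (y + d) := by
        apply integral_mono_on hn0 ((hker.mul hφc).intervalIntegrable _ _)
          ((hker.mul (continuous_id'.add continuous_const)).intervalIntegrable _ _)
        intro u hu
        exact mul_le_mul_of_nonneg_left (by show φ u ≤ u + d; linarith [(hφb u hu).2]) (hJ0 _)
      have h2 : (∫ y in (n:ℝ)..((n:ℝ)+d), J (x - y) * y)
          ≤ ∫ y in (n:ℝ)..((n:ℝ)+d), J (x - y) * (y + d) := by
        apply integral_mono_on hnnd ((hker.mul continuous_id').intervalIntegrable _ _)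
          ((hker.mul (continuous_id'.add continuous_const)).intervalIntegrable _ _)
        intro u hu
        exact mul_le_mul_of_nonneg_left (by show u ≤ u + d; linarith) (hJ0 _)
      have h3 : (∫ y in (0:ℝ)..(n:ℝ), J (x - y) * (y + d))
            + (∫ y in (n:ℝ)..((n:ℝ)+d), J (x - y) * (y + d))
          = ∫ y in (0:ℝ)..((n:ℝ)+d), J (x - y) * (y + d) :=
        intervalIntegral.integral_add_adjacent_intervals
          ((hker.mul (continuous_id'.add continuous_const)).intervalIntegrable _ _)
          ((hker.mul (continuous_id'.add continuous_const)).intervalIntegrable _ _)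
      have h4 : (∫ y in (0:ℝ)..((n:ℝ)+d), J (x - y) * (y + d)) ≤ ∫ y, J (x - y) * (y + d) := by
        apply hIleInt x 0 ((n:ℝ)+d) (by linarith) _ (continuous_id'.add continuous_const)
        intro y
        by_cases hJxy : J (x - y) = 0
        · simp [hJxy]
        · have hxy : x - y ∈ Ioo (-d) d := by
            by_contra hcon; exact hJxy (hJs _ hcon)
          have hyd : -d ≤ y := by linarith [hxy.2, hx.1]
          exact mul_nonneg (hJ0 _) (by show 0 ≤ y + d; linarith)
      rw [hTf_def]
      calc (∫ y in (0:ℝ)..(n:ℝ), J (x - y) * φ y) + ∫ y in (n:ℝ)..((n:ℝ)+d), J (x - y) * y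
          ≤ (∫ y in (0:ℝ)..(n:ℝ), J (x - y) * (y + d))
            + ∫ y in (n:ℝ)..((n:ℝ)+d), J (x - y) * (y + d) := add_le_add h1 h2
        _ = ∫ y in (0:ℝ)..((n:ℝ)+d), J (x - y) * (y + d) := h3
        _ ≤ ∫ y, J (x - y) * (y + d) := h4
        _ = x + d := hLinId x
  -- the invariant closed set
  set Kset : Set (ℝ →ᵇ ℝ) :=
    {ψ | ∀ x ∈ Icc (0:ℝ) (n:ℝ), 0 ≤ w x * ψ x ∧ w x * ψ x ≤ x + d} with hK_def
  have hKclosed : IsClosed Kset := by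
    have hrw : Kset = ⋂ x ∈ Icc (0:ℝ) (n:ℝ),
        ((fun ψ : ℝ →ᵇ ℝ => w x * ψ x) ⁻¹' Icc 0 (x + d)) := by
      ext ψ
      simp only [hK_def, mem_setOf_eq, mem_iInter, mem_preimage, mem_Icc]
    rw [hrw]
    apply isClosed_biInter
    intro x hx
    exact IsClosed.preimage
      (continuous_const.mul ((continuous_apply x).comp BoundedContinuousFunction.continuous_coe))
      isClosed_Icc
  have hSK : ∀ ψ ∈ Kset, S ψ ∈ Kset := by
    intro ψ hψ x hx
    have hval : w x * S ψ x = Tf (fun y => w y * ψ y) x := by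
      rw [hSapp, mul_comm, div_mul_cancel₀ _ (hw0 x).ne']
    rw [hval]
    exact hTK _ (hφψcont ψ) hψ x hx
  have h0K : (0 : ℝ →ᵇ ℝ) ∈ Kset := by
    intro x hx
    simp only [BoundedContinuousFunction.coe_zero, Pi.zero_apply, mul_zero]
    exact ⟨le_refl 0, by linarith [hx.1]⟩
  have hiter : ∀ k : ℕ, S^[k] 0 ∈ Kset := by
    intro k
    induction k with
    | zero => simpa using h0K
    | succ k ih => rw [Function.iterate_succ_apply']; exact hSK _ ih
  -- the fixed point
  set ψs : ℝ →ᵇ ℝ := ContractingWith.fixedPoint S hContr with hψs_def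
  have hfix : S ψs = ψs := hContr.fixedPoint_isFixedPt
  have hmem : ψs ∈ Kset :=
    hKclosed.mem_of_tendsto (hContr.tendsto_iterate_fixedPoint 0)
      (Filter.Eventually.of_forall hiter)
  have hφ'cont : Continuous (fun x => w x * ψs x) := hwcont.mul ψs.continuous
  have hφ'fix : ∀ x : ℝ, w x * ψs x
      = (∫ y in (0:ℝ)..(n:ℝ), J (x - y) * (w y * ψs y))
        + ∫ y in (n:ℝ)..((n:ℝ)+d), J (x - y) * y := by
    intro x
    have hval : S ψs x = ψs x := by rw [hfix]
    rw [hSapp] at hval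
    have : w x * ψs x = Tf (fun y => w y * ψs y) x := by
      rw [← hval, mul_comm, div_mul_cancel₀ _ (hw0 x).ne']
    rw [this, hTf_def]
  have hφ'b : ∀ x ∈ Icc (0:ℝ) (n:ℝ), 0 ≤ w x * ψs x ∧ w x * ψs x ≤ x + d := hmem
  -- assemble the solution
  set φF : ℝ → ℝ := fun x => if x < 0 then 0 else if (n:ℝ) < x then x else w x * ψs x
    with hφF_def
  have hEq : ∀ x ∈ Icc (0:ℝ) (n:ℝ), φF x = w x * ψs x := by
    intro x hx
    rw [hφF_def]
    simp only
    rw [if_neg (not_lt.2 hx.1), if_neg (not_lt.2 hx.2)]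
  refine ⟨φF, ?_, ?_, ?_, ?_, ?_⟩
  · exact hφ'cont.continuousOn.congr (fun x hx => hEq x hx)
  · intro x hx
    have hker : Continuous fun y : ℝ => J (x - y) :=
      hJcont.comp (continuous_const.sub continuous_id)
    have hid : ∀ y : ℝ, (n:ℝ) < y → φF y = y := by
      intro y hy
      rw [hφF_def]
      simp only
      rw [if_neg (not_lt.2 (le_trans hn0 hy.le)), if_pos hy]
    have i1 : IntervalIntegrable (fun y => J (x - y) * φF y) volume 0 n := by
      rw [intervalIntegrable_iff_integrableOn_Ioc_of_le hn0]
      apply IntegrableOn.congr_fun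
        (((hker.mul hφ'cont).integrableOn_Icc).mono_set Ioc_subset_Icc_self)
        ?_ measurableSet_Ioc
      intro y hy
      show J (x - y) * (w y * ψs y) = J (x - y) * φF y
      rw [hEq y ⟨hy.1.le, hy.2⟩]
    have i2 : IntervalIntegrable (fun y => J (x - y) * φF y) volume n ((n:ℝ)+d) := by
      rw [intervalIntegrable_iff_integrableOn_Ioc_of_le hnnd]
      apply IntegrableOn.congr_fun
        (((hker.mul continuous_id').integrableOn_Icc).mono_set Ioc_subset_Icc_self)
        ?_ measurableSet_Ioc
      intro y hy
      show J (x - y) * y = J (x - y) * φF y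
      rw [hid y hy.1]
    have e1 : ∫ y in (0:ℝ)..(n:ℝ), J (x - y) * φF y
        = ∫ y in (0:ℝ)..(n:ℝ), J (x - y) * (w y * ψs y) := by
      rw [integral_of_le hn0, integral_of_le hn0]
      apply setIntegral_congr_fun measurableSet_Ioc
      intro y hy
      show J (x - y) * φF y = J (x - y) * (w y * ψs y)
      rw [hEq y ⟨hy.1.le, hy.2⟩]
    have e2 : ∫ y in (n:ℝ)..((n:ℝ)+d), J (x - y) * φF y
        = ∫ y in (n:ℝ)..((n:ℝ)+d), J (x - y) * y := by
      rw [integral_of_le hnnd, integral_of_le hnnd]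
      apply setIntegral_congr_fun measurableSet_Ioc
      intro y hy
      show J (x - y) * φF y = J (x - y) * y
      rw [hid y hy.1]
    rw [← intervalIntegral.integral_add_adjacent_intervals i1 i2, e1, e2, hEq x hx]
    exact hφ'fix x
  · intro x hx
    rw [hφF_def]
    simp only
    rw [if_pos hx.2]
  · intro x hx
    rw [hφF_def]
    simp only
    rw [if_neg (not_lt.2 (le_trans hn0 hx.le)), if_pos hx]
  · intro x hx
    rw [hEq x hx]
    exact hφ'b x hx
end

section
/- The stationary problem J*φ = φ on [0,∞), φ = 0 on (-d,0), admits a solution φ satisfying x ≤ φ(x) ≤ x + d for all x ≥ 0; in particular φ(x) - x is bounded. -/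
open MeasureTheory Set

noncomputable def Tmap (d : ℝ) (J : ℝ → ℝ) (φ : ℝ → ℝ) : ℝ → ℝ := fun x =>
  if 0 ≤ x then ∫ y, J (x - y) * φ y else if -d < x then 0 else x + d

noncomputable def seqφ (d : ℝ) (J : ℝ → ℝ) : ℕ → ℝ → ℝ
  | 0 => fun x => if 0 ≤ x then x else if -d < x then 0 else x + d
  | n + 1 => Tmap d J (seqφ d J n)

section Aux

variable {d : ℝ} {J : ℝ → ℝ}

lemma ker_cont (hJc : Continuous J) (x : ℝ) : Continuous fun y => J (x - y) :=
  hJc.comp (continuous_const.sub continuous_id)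

lemma ker_cs (hJs : ∀ z, z ∉ Ioo (-d) d → J z = 0) (x : ℝ) :
    HasCompactSupport fun y => J (x - y) := by
  apply HasCompactSupport.intro (isCompact_Icc (a := x - d) (b := x + d))
  intro y hy
  apply hJs
  intro hmem
  exact hy ⟨by linarith [hmem.2], by linarith [hmem.1]⟩

lemma ker_int (hJc : Continuous J) (hJs : ∀ z, z ∉ Ioo (-d) d → J z = 0) (x : ℝ) :
    Integrable fun y => J (x - y) :=
  (ker_cont hJc x).integrable_of_hasCompactSupport (ker_cs hJs x)

lemma kerg_int (hJc : Continuous J) (hJs : ∀ z, z ∉ Ioo (-d) d → J z = 0)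
    {g : ℝ → ℝ} (hg : Continuous g) (x : ℝ) :
    Integrable fun y => J (x - y) * g y := by
  have : HasCompactSupport ((fun y => J (x - y)) * g) := (ker_cs hJs x).mul_right
  exact ((ker_cont hJc x).mul hg).integrable_of_hasCompactSupport this

lemma bound_int (hJc : Continuous J) (hJs : ∀ z, z ∉ Ioo (-d) d → J z = 0) (x : ℝ) :
    Integrable fun y => J (x - y) * (|y| + d) :=
  kerg_int hJc hJs (continuous_abs.add continuous_const) x

lemma mul_int (hJc : Continuous J) (hJ0 : ∀ z, 0 ≤ J z)
    (hJs : ∀ z, z ∉ Ioo (-d) d → J z = 0)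
    {φ : ℝ → ℝ} (hφ : Measurable φ) (hbd : ∀ y, |φ y| ≤ |y| + d) (x : ℝ) :
    Integrable fun y => J (x - y) * φ y := by
  refine (bound_int hJc hJs x).mono' ?_ ?_
  · exact (((ker_cont hJc x).measurable).mul hφ).aestronglyMeasurable
  · refine Filter.Eventually.of_forall fun y => ?_
    rw [Real.norm_eq_abs, abs_mul, abs_of_nonneg (hJ0 _)]
    exact mul_le_mul_of_nonneg_left (hbd y) (hJ0 _)

lemma int_ker (hJ1 : ∫ z, J z = 1) (x : ℝ) : ∫ y, J (x - y) = 1 := by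
  rw [MeasureTheory.integral_sub_left_eq_self J volume x, hJ1]

lemma int_odd (hJe : ∀ z, J (-z) = J z) : ∫ z, J z * z = 0 := by
  have h : ∫ z, J z * z = -∫ z, J z * z := by
    conv_lhs => rw [← MeasureTheory.integral_neg_eq_self (fun z => J z * z) volume]
    have : ∀ z : ℝ, J (-z) * (-z) = -(J z * z) := by
      intro z; rw [hJe]; ring
    simp only [this, integral_neg]
  linarith
lemma int_ker_id (hJc : Continuous J) (hJe : ∀ z, J (-z) = J z)
    (hJs : ∀ z, z ∉ Ioo (-d) d → J z = 0) (hJ1 : ∫ z, J z = 1) (x : ℝ) :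
    ∫ y, J (x - y) * y = x := by
  have h0 : ∫ y, J (x - y) * (x - (x - y)) = ∫ z, J z * (x - z) :=
    MeasureTheory.integral_sub_left_eq_self (fun z => J z * (x - z)) volume x
  have h0' : ∫ y, J (x - y) * y = ∫ z, J z * (x - z) := by
    rw [← h0]; congr 1; ext y; rw [sub_sub_cancel]
  rw [h0']
  have hJint : Integrable J := hJc.integrable_of_hasCompactSupport
    (HasCompactSupport.intro (isCompact_Icc (a := -d) (b := d))
      (fun z hz => hJs z (fun hm => hz ⟨hm.1.le, hm.2.le⟩)))

  have hJcs : HasCompactSupport J := HasCompactSupport.intro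
    (isCompact_Icc (a := -d) (b := d)) (fun z hz => hJs z (fun hm => hz ⟨hm.1.le, hm.2.le⟩))
  have hid : Integrable (fun z => J z * z) :=
    (hJc.mul continuous_id).integrable_of_hasCompactSupport hJcs.mul_right
  have hsplit : ∫ z, J z * (x - z) = ∫ z, (J z * x - J z * z) := by
    congr 1; ext z; ring
  rw [hsplit, integral_sub (hJint.mul_const x) hid, integral_mul_const, hJ1,
    int_odd hJe]
  ring

lemma int_ker_affine (hJc : Continuous J) (hJe : ∀ z, J (-z) = J z)
    (hJs : ∀ z, z ∉ Ioo (-d) d → J z = 0) (hJ1 : ∫ z, J z = 1) (x : ℝ) :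
    ∫ y, J (x - y) * (y + d) = x + d := by
  have h1 : Integrable fun y => J (x - y) * y := kerg_int hJc hJs continuous_id x
  have h2 : Integrable fun y => J (x - y) * d := (ker_int hJc hJs x).mul_const d
  have : ∫ y, J (x - y) * (y + d) = (∫ y, J (x - y) * y) + ∫ y, J (x - y) * d := by
    rw [← integral_add h1 h2]; congr 1; ext y; ring
  rw [this, int_ker_id hJc hJe hJs hJ1, integral_mul_const, int_ker hJ1, one_mul]

lemma seq_zero_le_id (hd : 0 < d) (x : ℝ) : x ≤ seqφ d J 0 x := by
  simp only [seqφ]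
  split_ifs with h1 h2
  · exact le_refl x
  · linarith
  · linarith

lemma seq_zero_abs (hd : 0 < d) {x t : ℝ} (h1 : seqφ d J 0 x ≤ t) (h2 : t ≤ x + d) :
    |t| ≤ |x| + d := by
  rw [abs_le]
  constructor
  · have : -(|x| + d) ≤ seqφ d J 0 x := by
      simp only [seqφ]
      split_ifs with hx hx2
      · have := abs_nonneg x; have := neg_abs_le x; linarith
      · have := abs_nonneg x; linarith
      · have := neg_abs_le x; linarith
    linarith
  · have := le_abs_self x; linarith

lemma Tmap_meas (hJc : Continuous J) {φ : ℝ → ℝ} (hφ : Measurable φ) :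
    Measurable (Tmap d J φ) := by
  have hint : Measurable fun x => ∫ y, J (x - y) * φ y := by
    have hsm : StronglyMeasurable fun p : ℝ × ℝ => J (p.1 - p.2) * φ p.2 :=
      (((hJc.comp (continuous_fst.sub continuous_snd)).measurable).mul
        (hφ.comp measurable_snd)).stronglyMeasurable
    exact hsm.integral_prod_right'.measurable
  unfold Tmap
  refine Measurable.ite (measurableSet_le measurable_const measurable_id) hint ?_
  exact Measurable.ite (measurableSet_lt measurable_const measurable_id)
    measurable_const (measurable_id.add_const d)

theorem stationary_aux (hd : 0 < d) (hJc : Continuous J) (hJ0 : ∀ z, 0 ≤ J z)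
    (hJe : ∀ z, J (-z) = J z)
    (hJs : ∀ z, z ∉ Ioo (-d) d → J z = 0) (hJ1 : ∫ z, J z = 1) :
    ∀ n, Measurable (seqφ d J n) ∧ (∀ x, seqφ d J 0 x ≤ seqφ d J n x) ∧
      (∀ x, seqφ d J n x ≤ x + d) := by
  intro n
  induction n with
  | zero =>
    refine ⟨?_, fun x => le_refl _, fun x => ?_⟩
    · unfold seqφ
      refine Measurable.ite (measurableSet_le measurable_const measurable_id)
        measurable_id ?_
      exact Measurable.ite (measurableSet_lt measurable_const measurable_id)
        measurable_const (measurable_id.add_const d)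
    · simp only [seqφ]
      split_ifs with h1 h2 <;> linarith
  | succ n ih =>
    obtain ⟨hm, hlow, hup⟩ := ih
    have habs : ∀ y, |seqφ d J n y| ≤ |y| + d := fun y =>
      seq_zero_abs hd (hlow y) (hup y)
    have hint : ∀ x, Integrable fun y => J (x - y) * seqφ d J n y :=
      mul_int hJc hJ0 hJs hm habs
    refine ⟨Tmap_meas hJc hm, fun x => ?_, fun x => ?_⟩
    · show seqφ d J 0 x ≤ Tmap d J (seqφ d J n) x
      simp only [Tmap]
      by_cases h1 : 0 ≤ x
      · rw [if_pos h1]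
        have hs0 : seqφ d J 0 x = x := by simp only [seqφ]; rw [if_pos h1]
        rw [hs0]
        have hid : ∀ y : ℝ, y ≤ seqφ d J n y := fun y =>
          le_trans (seq_zero_le_id hd y) (hlow y)
        have step : ∫ y, J (x - y) * y ≤ ∫ y, J (x - y) * seqφ d J n y := by
          refine integral_mono (kerg_int hJc hJs continuous_id x) (hint x) ?_
          intro y
          exact mul_le_mul_of_nonneg_left (hid y) (hJ0 _)
        rw [int_ker_id hJc hJe hJs hJ1 x] at step
        exact step
      · rw [if_neg h1]
        simp only [seqφ]
        rw [if_neg h1]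
    · show Tmap d J (seqφ d J n) x ≤ x + d
      simp only [Tmap]
      split_ifs with h1 h2
      · have step : ∫ y, J (x - y) * seqφ d J n y ≤ ∫ y, J (x - y) * (y + d) := by
          refine integral_mono (hint x)
            (kerg_int hJc hJs (continuous_id.add continuous_const) x) ?_
          intro y
          exact mul_le_mul_of_nonneg_left (hup y) (hJ0 _)
        rw [← int_ker_affine hJc hJe hJs hJ1 x] at *
        exact step
      · linarith
      · exact le_refl _

theorem stationary_mono (hd : 0 < d) (hJc : Continuous J) (hJ0 : ∀ z, 0 ≤ J z)
    (hJe : ∀ z, J (-z) = J z)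
    (hJs : ∀ z, z ∉ Ioo (-d) d → J z = 0) (hJ1 : ∫ z, J z = 1) :
    ∀ n x, seqφ d J n x ≤ seqφ d J (n + 1) x := by
  intro n
  induction n with
  | zero => exact (stationary_aux hd hJc hJ0 hJe hJs hJ1 1).2.1
  | succ n ih =>
    intro x
    obtain ⟨hm, hlow, hup⟩ := stationary_aux hd hJc hJ0 hJe hJs hJ1 n
    obtain ⟨hm', hlow', hup'⟩ := stationary_aux hd hJc hJ0 hJe hJs hJ1 (n + 1)
    show Tmap d J (seqφ d J n) x ≤ Tmap d J (seqφ d J (n + 1)) x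
    simp only [Tmap]
    split_ifs with h1
    · refine integral_mono
        (mul_int hJc hJ0 hJs hm (fun y => seq_zero_abs hd (hlow y) (hup y)) x)
        (mul_int hJc hJ0 hJs hm' (fun y => seq_zero_abs hd (hlow' y) (hup' y)) x) ?_
      intro y
      exact mul_le_mul_of_nonneg_left (ih y) (hJ0 _)
    all_goals exact le_refl _

end Aux

theorem stationary_solution_exists
    (d : ℝ) (hd : 0 < d)
    (J : ℝ → ℝ) (hJsm : ContDiff ℝ (⊤ : ℕ∞) J) (hJ0 : ∀ z, 0 ≤ J z)
    (hJe : ∀ z, J (-z) = J z)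
    (hJs : ∀ z, z ∉ Ioo (-d) d → J z = 0)
    (hJ1 : ∫ z, J z = 1) :
    ∃ φ : ℝ → ℝ,
      (∀ x : ℝ, 0 ≤ x → (∫ y, J (x - y) * φ y) = φ x) ∧
      (∀ x ∈ Ioo (-d) (0 : ℝ), φ x = 0) ∧
      (∀ x : ℝ, 0 ≤ x → x ≤ φ x ∧ φ x ≤ x + d) ∧
      (∃ C : ℝ, ∀ x : ℝ, 0 ≤ x → |φ x - x| ≤ C) := by
  have hJc : Continuous J := hJsm.continuous
  set φ : ℝ → ℝ := fun x => ⨆ n, seqφ d J n x with hφdef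
  have haux := stationary_aux hd hJc hJ0 hJe hJs hJ1
  have hmono := stationary_mono hd hJc hJ0 hJe hJs hJ1
  have hmonox : ∀ x, Monotone fun n => seqφ d J n x := fun x =>
    monotone_nat_of_le_succ fun n => hmono n x
  have hbdd : ∀ x, BddAbove (range fun n => seqφ d J n x) := by
    intro x
    refine ⟨x + d, ?_⟩
    rintro t ⟨n, rfl⟩
    exact (haux n).2.2 x
  have htend : ∀ x, Filter.Tendsto (fun n => seqφ d J n x) Filter.atTop (nhds (φ x)) :=
    fun x => tendsto_atTop_ciSup (hmonox x) (hbdd x)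
  have hle : ∀ n x, seqφ d J n x ≤ φ x := fun n x => le_ciSup (hbdd x) n
  have hup : ∀ x, φ x ≤ x + d := fun x => ciSup_le fun n => (haux n).2.2 x
  have hlow0 : ∀ x, seqφ d J 0 x ≤ φ x := hle 0
  have habs : ∀ y, |φ y| ≤ |y| + d := fun y => seq_zero_abs hd (hlow0 y) (hup y)
  refine ⟨φ, ?_, ?_, ?_, ⟨d, ?_⟩⟩
  · -- equation
    intro x hx
    have h1 : Filter.Tendsto (fun n => ∫ y, J (x - y) * seqφ d J n y) Filter.atTop
        (nhds (∫ y, J (x - y) * φ y)) := by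
      refine tendsto_integral_of_dominated_convergence
        (fun y => J (x - y) * (|y| + d)) ?_ (bound_int hJc hJs x) ?_ ?_
      · intro n
        exact (((ker_cont hJc x).measurable).mul (haux n).1).aestronglyMeasurable
      · intro n
        refine Filter.Eventually.of_forall fun y => ?_
        rw [Real.norm_eq_abs, abs_mul, abs_of_nonneg (hJ0 _)]
        exact mul_le_mul_of_nonneg_left
          (seq_zero_abs hd ((haux n).2.1 y) ((haux n).2.2 y)) (hJ0 _)
      · refine Filter.Eventually.of_forall fun y => ?_
        exact (htend y).const_mul _
    have h2 : Filter.Tendsto (fun n => ∫ y, J (x - y) * seqφ d J n y) Filter.atTop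
        (nhds (φ x)) := by
      have heq : ∀ n, ∫ y, J (x - y) * seqφ d J n y = seqφ d J (n + 1) x := by
        intro n
        show _ = Tmap d J (seqφ d J n) x
        simp only [Tmap]
        rw [if_pos hx]
      simp only [heq]
      exact (htend x).comp (Filter.tendsto_add_atTop_nat 1)
    exact tendsto_nhds_unique h1 h2
  · -- zero on (-d,0)
    intro x hx
    have hz : ∀ n, seqφ d J n x = 0 := by
      intro n
      cases n with
      | zero => simp only [seqφ]; rw [if_neg (not_le.mpr hx.2), if_pos hx.1]
      | succ n =>
        show Tmap d J (seqφ d J n) x = 0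
        simp only [Tmap]
        rw [if_neg (not_le.mpr hx.2), if_pos hx.1]
    simp only [hφdef, hz, ciSup_const]
  · -- bounds
    intro x hx
    refine ⟨?_, hup x⟩
    have := hlow0 x
    simp only [seqφ, if_pos hx] at this
    exact this
  · -- bounded difference
    intro x hx
    have h1 : x ≤ φ x := by
      have := hlow0 x
      simp only [seqφ, if_pos hx] at this
      exact this
    have h2 := hup x
    rw [abs_le]
    constructor <;> linarith
end

section
/- Suppose φ : ℝ → ℝ is bounded and satisfies J*φ = φ on [0,∞) and φ = 0 on (-d, 0), where J > 0 on (-d,d). If there exists x̄ ≥ 0 with φ(x̄) ≥ φ⁺ - ε⁴ (where φ⁺ = sup_{x≥0} φ), then the Lebesgue measure of the set {x ≥ 0 : |x - x̄| < d, φ(x) ≤ φ⁺ - ε} is at most 3ε/γ, where γ = min_{|z| ≤ 3d/4} J(z), provided d/4 > ε²/γ. -/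
/-!
For `c ≥ 0` the identity `φ⁺ - φ c = ∫ J (c - y) (φ⁺ - φ y) dy` has a nonnegative integrand
as soon as `φ⁺ ≥ 0` (on `(-d, 0)` it is `J (c - y) φ⁺`), and `J (c - y) ≥ γ` for
`|y - c| ≤ 3d/4`. Hence near a point `c` with `φ c ≥ φ⁺ - δ` the set where `φ ≤ φ⁺ - η` has
measure at most `δ / (γ η)`. At `x̄` with `η = ε²` this gives measure `≤ ε² / γ < d / 4`, so
each interval of length `d / 4` within `3d/4` of `x̄` contains a point `c` with
`φ c > φ⁺ - ε²`; two such points cover the `d`-neighbourhood of `x̄` by their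
`3d/4`-neighbourhoods, each contributing `ε / γ`.

That `φ⁺ ≥ 0` is a flux argument. Let `F` be the distribution function of `J` and `H` the
Heaviside function. Integrating `J * φ = φ` over `[a, b] ⊆ [0, ∞)` shows that the flux
`x ↦ ∫ (F - H) (x - y) φ y dy` is constant on `[0, ∞)`. As `J` is even, `F - H` has mean
zero, so its primitive has compact support and the integral of the flux over `[0, T]` stays
bounded: the flux vanishes. But if `φ⁺ < 0`, the flux at `0` is `∫_{y > 0} F (-y) φ y dy < 0`.
-/

open MeasureTheory Set Filter

noncomputable def cumulativeIntegral (g : ℝ → ℝ) (t : ℝ) : ℝ := ∫ z in Iic t, g z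

section Cumulative

variable {g : ℝ → ℝ} {a b t : ℝ}

lemma hasCompactSupport_of_eq_zero_of_notMem_Ioo (hg : ∀ x ∉ Ioo a b, g x = 0) :
    HasCompactSupport g :=
  HasCompactSupport.intro isCompact_Icc fun x hx => hg x fun h => hx (Ioo_subset_Icc_self h)

lemma cumulativeIntegral_sub_cumulativeIntegral (hg : Integrable g) (hab : a ≤ b) :
    cumulativeIntegral g b - cumulativeIntegral g a = ∫ x in Ioc a b, g x := by
  rw [← intervalIntegral.integral_of_le hab,
    ← intervalIntegral.integral_Iic_sub_Iic hg.integrableOn hg.integrableOn, cumulativeIntegral,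
    cumulativeIntegral]

lemma continuous_cumulativeIntegral (hg : Integrable g) : Continuous (cumulativeIntegral g) := by
  have h : cumulativeIntegral g = fun t => cumulativeIntegral g 0 + ∫ x in (0 : ℝ)..t, g x := by
    funext t
    rw [← intervalIntegral.integral_Iic_sub_Iic hg.integrableOn hg.integrableOn]
    simp only [cumulativeIntegral, add_sub_cancel]
  rw [h]
  exact continuous_const.add
    (intervalIntegral.continuous_primitive (fun _ _ => hg.intervalIntegrable) 0)

lemma cumulativeIntegral_eq_zero_of_le (hg : ∀ x ∉ Ioo a b, g x = 0) (ht : t ≤ a) :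
    cumulativeIntegral g t = 0 :=
  setIntegral_eq_zero_of_forall_eq_zero fun x hx => hg x fun h => (h.1.trans_le (hx.trans ht)).false

lemma cumulativeIntegral_eq_integral_of_le (hg : ∀ x ∉ Ioo a b, g x = 0) (ht : b ≤ t) :
    cumulativeIntegral g t = ∫ x, g x := by
  rw [cumulativeIntegral, setIntegral_eq_integral_of_forall_compl_eq_zero]
  intro x hx
  exact hg x fun h => hx (h.2.le.trans ht)

lemma setIntegral_Ioc_comp_sub (hg : Integrable g) (hab : a ≤ b) (y : ℝ) :
    ∫ x in Ioc a b, g (x - y) = cumulativeIntegral g (b - y) - cumulativeIntegral g (a - y) := by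
  rw [cumulativeIntegral_sub_cumulativeIntegral hg (by linarith),
    ← intervalIntegral.integral_of_le hab, ← intervalIntegral.integral_of_le (by linarith),
    intervalIntegral.integral_comp_sub_right]

end Cumulative

section Convolution

variable {g ψ : ℝ → ℝ} {C : ℝ}

lemma integrable_comp_sub_mul (hg : Integrable g) (hψ : AEStronglyMeasurable ψ)
    (hψC : ∀ y, |ψ y| ≤ C) (x : ℝ) : Integrable fun y => g (x - y) * ψ y :=
  (hg.comp_sub_left x).mul_bdd hψ
    (Eventually.of_forall fun y => (Real.norm_eq_abs _).le.trans (hψC y))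

lemma setIntegral_Ioc_integral_comp_sub_mul (hg : Integrable g) (hψ : AEStronglyMeasurable ψ)
    (hψC : ∀ y, |ψ y| ≤ C) {a b : ℝ} (hab : a ≤ b) :
    ∫ x in Ioc a b, ∫ y, g (x - y) * ψ y =
      ∫ y, (cumulativeIntegral g (b - y) - cumulativeIntegral g (a - y)) * ψ y := by
  have hmeas : AEStronglyMeasurable (Function.uncurry fun x y => g (x - y) * ψ y)
      ((volume.restrict (Ioc a b)).prod volume) := by
    have := (hψ.convolution_integrand (ContinuousLinearMap.lsmul ℝ ℝ) hg.1 (μ := volume)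
      (ν := volume)).restrict (s := Ioc a b ×ˢ univ)
    rw [← Measure.prod_restrict, Measure.restrict_univ] at this
    simpa [Function.uncurry_def, mul_comm] using this
  have hprod : Integrable (Function.uncurry fun x y => g (x - y) * ψ y)
      ((volume.restrict (Ioc a b)).prod volume) := by
    refine (integrable_prod_iff hmeas).2 ⟨Eventually.of_forall
      (integrable_comp_sub_mul hg hψ hψC), Integrable.of_bound hmeas.norm.integral_prod_right'
        (C * ∫ y, ‖g y‖) (Eventually.of_forall fun x => ?_)⟩
    have hψC' : ∀ y, ‖ψ y‖ ≤ C := fun y => (Real.norm_eq_abs _).le.trans (hψC y)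
    calc ‖∫ y, ‖Function.uncurry (fun x y => g (x - y) * ψ y) (x, y)‖‖
        = ∫ y, ‖g (x - y)‖ * ‖ψ y‖ := by
          simp only [Function.uncurry_apply_pair, norm_mul]
          exact Real.norm_of_nonneg (integral_nonneg fun _ => by positivity)
      _ ≤ ∫ y, C * ‖g (x - y)‖ :=
          integral_mono ((integrable_comp_sub_mul hg hψ hψC x).norm.congr
            (Eventually.of_forall fun y => norm_mul _ _))
            ((hg.comp_sub_left x).norm.const_mul C)
            fun y => by nlinarith [hψC' y, norm_nonneg (g (x - y))]
      _ = C * ∫ y, ‖g y‖ := by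
          rw [integral_const_mul, integral_sub_left_eq_self (fun y => ‖g y‖) volume x]
  rw [integral_integral_swap hprod]
  congr 1
  funext y
  rw [integral_mul_const, setIntegral_Ioc_comp_sub hg hab]

lemma abs_integral_sub_mul_le {G : ℝ → ℝ} (hG : Integrable G) (hψC : ∀ y, |ψ y| ≤ C) (a b : ℝ) :
    |∫ y, (G (b - y) - G (a - y)) * ψ y| ≤ 2 * C * ∫ y, |G y| := by
  have hGa := (hG.comp_sub_left a).abs
  have hGb := (hG.comp_sub_left b).abs
  calc |∫ y, (G (b - y) - G (a - y)) * ψ y|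
      ≤ ∫ y, (C * |G (b - y)| + C * |G (a - y)|) := by
        rw [← Real.norm_eq_abs]
        refine norm_integral_le_of_norm_le ((hGb.const_mul C).add (hGa.const_mul C))
          (Eventually.of_forall fun y => ?_)
        rw [Real.norm_eq_abs, abs_mul]
        nlinarith [abs_sub (G (b - y)) (G (a - y)), hψC y, abs_nonneg (ψ y),
          abs_nonneg (G (b - y) - G (a - y))]
    _ = 2 * C * ∫ y, |G y| := by
        rw [integral_add (hGb.const_mul C) (hGa.const_mul C), integral_const_mul,
          integral_const_mul, integral_sub_left_eq_self (fun y => |G y|) volume b,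
          integral_sub_left_eq_self (fun y => |G y|) volume a]
        ring

end Convolution

lemma le_csSup_image_of_abs_le {φ : ℝ → ℝ} {C x : ℝ} {s : Set ℝ} (hφC : ∀ y, |φ y| ≤ C)
    (hx : x ∈ s) : φ x ≤ sSup (φ '' s) :=
  le_csSup ⟨C, by rintro _ ⟨y, -, rfl⟩; exact (abs_le.1 (hφC y)).2⟩ (mem_image_of_mem φ hx)

lemma exists_mem_Icc_notMem_of_measure_lt {S : Set ℝ} {m ℓ : ℝ}
    (h : volume (Icc m (m + ℓ) ∩ S) < ENNReal.ofReal ℓ) : ∃ c ∈ Icc m (m + ℓ), c ∉ S := by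
  by_contra! hc
  rw [inter_eq_left.2 hc, Real.volume_Icc, add_sub_cancel_left] at h
  exact h.false

lemma exists_two_centers {P : ℝ → Prop} {d x₀ : ℝ} (hd : 0 < d) (hx₀ : 0 ≤ x₀)
    (hP : volume {y | 0 ≤ y ∧ |y - x₀| ≤ 3 * d / 4 ∧ P y} < ENNReal.ofReal (d / 4)) :
    ∃ c₁ c₂, 0 ≤ c₁ ∧ 0 ≤ c₂ ∧ ¬P c₁ ∧ ¬P c₂ ∧
      ∀ x, 0 ≤ x → |x - x₀| < d → |x - c₁| ≤ 3 * d / 4 ∨ |x - c₂| ≤ 3 * d / 4 := by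
  have hfree : ∀ m, 0 ≤ m → x₀ - 3 * d / 4 ≤ m → m ≤ x₀ + d / 2 →
      ∃ c ∈ Icc m (m + d / 4), 0 ≤ c ∧ ¬P c := by
    intro m hm h₁ h₂
    refine (exists_mem_Icc_notMem_of_measure_lt (S := {y | P y})
      ((measure_mono fun y hy => ?_).trans_lt hP)).imp
      fun c ⟨hc, hcS⟩ => ⟨hc, hm.trans hc.1, hcS⟩
    exact ⟨hm.trans hy.1.1, abs_le.2 ⟨by linarith [hy.1.1], by linarith [hy.1.2]⟩, hy.2⟩
  have hm : max 0 (x₀ - d / 2) ≤ x₀ + d / 2 := max_le (by linarith) (by linarith)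
  have hm' := le_max_right 0 (x₀ - d / 2)
  obtain ⟨c₁, hc₁, hc₁0, hc₁S⟩ := hfree (x₀ + d / 4) (by linarith) (by linarith) (by linarith)
  obtain ⟨c₂, hc₂, hc₂0, hc₂S⟩ := hfree _ (le_max_left _ _) (by linarith) hm
  refine ⟨c₁, c₂, hc₁0, hc₂0, hc₁S, hc₂S, fun x hx hxd => ?_⟩
  obtain ⟨hxd₁, hxd₂⟩ := abs_lt.1 hxd
  rcases le_or_gt (x₀ - d / 4) x with h | h
  · exact Or.inl (abs_le.2 ⟨by linarith [hc₁.2], by linarith [hc₁.1]⟩)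
  · have : max 0 (x₀ - d / 2) ≤ x + d / 2 := max_le (by linarith) (by linarith)
    exact Or.inr (abs_le.2 ⟨by linarith [hc₂.2], by linarith [hc₂.1]⟩)

lemma sInf_image_Icc_pos {J : ℝ → ℝ} {d r : ℝ} (hJc : Continuous J)
    (hJpos : ∀ z ∈ Ioo (-d) d, 0 < J z) (hr : 0 ≤ r) (hrd : r < d) :
    0 < sInf (J '' Icc (-r) r) := by
  obtain ⟨z, hz, hzJ⟩ :=
    (isCompact_Icc.image hJc).sInf_mem ((nonempty_Icc.2 (by linarith : -r ≤ r)).image J)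
  rw [← hzJ]
  exact hJpos z ⟨by linarith [hz.1], by linarith [hz.2]⟩

structure IsKernel (d : ℝ) (J : ℝ → ℝ) : Prop where
  nonneg : ∀ z, 0 ≤ J z
  eq_zero_of_notMem : ∀ z ∉ Ioo (-d) d, J z = 0
  integrable : Integrable J
  integral_eq_one : ∫ z, J z = 1

noncomputable def cdfDefect (J : ℝ → ℝ) (t : ℝ) : ℝ :=
  cumulativeIntegral J t - if 0 ≤ t then 1 else 0

namespace IsKernel

variable {d : ℝ} {J : ℝ → ℝ}

lemma pos (hJ : IsKernel d J) : 0 < d := by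
  by_contra! hd
  have hJ0 : J = 0 := funext fun z => hJ.eq_zero_of_notMem z fun h => by linarith [h.1, h.2]
  simpa [hJ0] using hJ.integral_eq_one

lemma cumulativeIntegral_nonneg (hJ : IsKernel d J) (t : ℝ) : 0 ≤ cumulativeIntegral J t :=
  setIntegral_nonneg measurableSet_Iic fun z _ => hJ.nonneg z

lemma cumulativeIntegral_le_one (hJ : IsKernel d J) (t : ℝ) : cumulativeIntegral J t ≤ 1 :=
  hJ.integral_eq_one ▸ setIntegral_le_integral hJ.integrable (Eventually.of_forall hJ.nonneg)

lemma cumulativeIntegral_eq_one (hJ : IsKernel d J) {t : ℝ} (ht : d ≤ t) :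
    cumulativeIntegral J t = 1 :=
  hJ.integral_eq_one ▸ cumulativeIntegral_eq_integral_of_le hJ.eq_zero_of_notMem ht

lemma cumulativeIntegral_add_cumulativeIntegral_neg (hJ : IsKernel d J)
    (hJe : ∀ z, J (-z) = J z) (t : ℝ) : cumulativeIntegral J t + cumulativeIntegral J (-t) = 1 := by
  have hneg : cumulativeIntegral J (-t) = ∫ z in Ioi t, J z := by
    rw [cumulativeIntegral, ← integral_comp_neg_Ioi]
    simp only [hJe]
  rw [hneg, cumulativeIntegral, ← hJ.integral_eq_one,
    ← integral_add_compl measurableSet_Iic hJ.integrable, compl_Iic]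

lemma mul_sub_le_cumulativeIntegral (hJ : IsKernel d J) {γ a b t : ℝ}
    (hγ : ∀ z ∈ Icc a b, γ ≤ J z) (hab : a ≤ b) (hbt : b ≤ t) :
    γ * (b - a) ≤ cumulativeIntegral J t :=
  calc γ * (b - a) ≤ ∫ z in Icc a b, J z := by
        have := setIntegral_ge_of_const_le_real measurableSet_Icc measure_Icc_lt_top.ne hγ
          hJ.integrable.integrableOn
        rwa [Real.volume_real_Icc_of_le hab] at this
    _ ≤ cumulativeIntegral J t :=
        setIntegral_mono_set hJ.integrable.integrableOn (Eventually.of_forall hJ.nonneg)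
          (Eventually.of_forall fun z hz => (hz.2.trans hbt : z ≤ t))

lemma abs_cdfDefect_le (hJ : IsKernel d J) (t : ℝ) : |cdfDefect J t| ≤ 1 := by
  have h0 := hJ.cumulativeIntegral_nonneg t
  have h1 := hJ.cumulativeIntegral_le_one t
  rw [cdfDefect, abs_le]
  split_ifs <;> constructor <;> linarith

lemma cdfDefect_eq_zero (hJ : IsKernel d J) {t : ℝ} (ht : t ∉ Ioo (-d) d) : cdfDefect J t = 0 := by
  have hd := hJ.pos
  rcases le_or_gt d t with hdt | htd
  · rw [cdfDefect, hJ.cumulativeIntegral_eq_one hdt, if_pos (by linarith), sub_self]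
  · have htd' : t ≤ -d := not_lt.1 fun h => ht ⟨h, htd⟩
    rw [cdfDefect, cumulativeIntegral_eq_zero_of_le hJ.eq_zero_of_notMem htd',
      if_neg (by linarith), sub_zero]

lemma integrable_cdfDefect (hJ : IsKernel d J) : Integrable (cdfDefect J) := by
  have hmeas : Measurable (cdfDefect J) :=
    (continuous_cumulativeIntegral hJ.integrable).measurable.sub
      (Measurable.ite (measurableSet_Ici (a := (0 : ℝ))) measurable_const measurable_const)
  refine IntegrableOn.integrable_of_forall_notMem_eq_zero (s := Ioo (-d) d) ?_
    fun t ht => hJ.cdfDefect_eq_zero ht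
  exact Measure.integrableOn_of_bounded measure_Ioo_lt_top.ne hmeas.aestronglyMeasurable
    (M := 1) (ae_of_all _ fun t => (Real.norm_eq_abs _).le.trans (hJ.abs_cdfDefect_le t))

lemma integral_cdfDefect (hJ : IsKernel d J) (hJe : ∀ z, J (-z) = J z) :
    ∫ t, cdfDefect J t = 0 := by
  have hleft : ∫ t in Iic 0, cdfDefect J t = ∫ t in Iio 0, cumulativeIntegral J t := by
    rw [integral_Iic_eq_integral_Iio]
    refine setIntegral_congr_fun measurableSet_Iio fun t ht => ?_
    simp [cdfDefect, not_le.2 (mem_Iio.1 ht)]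
  have hright : ∫ t in Ioi 0, cdfDefect J t = -∫ t in Iio 0, cumulativeIntegral J t := by
    have hrefl := integral_comp_neg_Ioi 0 (cumulativeIntegral J)
    rw [neg_zero] at hrefl
    rw [← integral_Iic_eq_integral_Iio, ← hrefl, ← integral_neg]
    refine setIntegral_congr_fun measurableSet_Ioi fun t ht => ?_
    have := hJ.cumulativeIntegral_add_cumulativeIntegral_neg hJe t
    simp only [cdfDefect, if_pos (le_of_lt (mem_Ioi.1 ht))]
    linarith
  rw [← integral_add_compl measurableSet_Iic hJ.integrable_cdfDefect, compl_Iic, hleft, hright,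
    add_neg_cancel]

lemma cumulativeIntegral_cdfDefect_eq_zero (hJ : IsKernel d J) (hJe : ∀ z, J (-z) = J z) {t : ℝ}
    (ht : t ∉ Ioo (-d) d) : cumulativeIntegral (cdfDefect J) t = 0 := by
  rcases le_or_gt d t with hdt | htd
  · rw [cumulativeIntegral_eq_integral_of_le (fun _ => hJ.cdfDefect_eq_zero) hdt,
      hJ.integral_cdfDefect hJe]
  · exact cumulativeIntegral_eq_zero_of_le (fun _ => hJ.cdfDefect_eq_zero)
      (not_lt.1 fun h => ht ⟨h, htd⟩)

lemma integrable_cumulativeIntegral_cdfDefect (hJ : IsKernel d J) (hJe : ∀ z, J (-z) = J z) :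
    Integrable (cumulativeIntegral (cdfDefect J)) :=
  (continuous_cumulativeIntegral hJ.integrable_cdfDefect).integrable_of_hasCompactSupport
    (hasCompactSupport_of_eq_zero_of_notMem_Ioo fun _ =>
      hJ.cumulativeIntegral_cdfDefect_eq_zero hJe)

variable {φ : ℝ → ℝ} {C : ℝ}

lemma integral_cdfDefect_comp_sub_mul_eq (hJ : IsKernel d J) (hφ : AEStronglyMeasurable φ)
    (hφC : ∀ y, |φ y| ≤ C) {a b : ℝ} (hφJ : ∀ x ∈ Ioc a b, ∫ y, J (x - y) * φ y = φ x)
    (hab : a ≤ b) :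
    ∫ y, cdfDefect J (b - y) * φ y = ∫ y, cdfDefect J (a - y) * φ y := by
  have hint := integrable_comp_sub_mul hJ.integrable_cdfDefect hφ hφC
  have hφi : Integrable ((Ioc a b).indicator φ) :=
    (IntegrableOn.of_bound measure_Ioc_lt_top hφ.restrict C
      (ae_of_all _ fun y => (Real.norm_eq_abs _).le.trans (hφC y))).integrable_indicator
      measurableSet_Ioc
  have hsplit : ∀ y, (cumulativeIntegral J (b - y) - cumulativeIntegral J (a - y)) * φ y =
      cdfDefect J (b - y) * φ y - cdfDefect J (a - y) * φ y + (Ioc a b).indicator φ y := by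
    intro y
    simp only [cdfDefect, indicator, mem_Ioc, sub_nonneg]
    split_ifs <;> grind
  have hdiff : Integrable fun y => cdfDefect J (b - y) * φ y - cdfDefect J (a - y) * φ y :=
    (hint b).sub (hint a)
  have key := setIntegral_Ioc_integral_comp_sub_mul hJ.integrable hφ hφC hab
  rw [setIntegral_congr_fun measurableSet_Ioc hφJ, integral_congr_ae (ae_of_all _ hsplit),
    integral_add hdiff hφi, integral_sub (hint b) (hint a),
    integral_indicator measurableSet_Ioc] at key
  linarith

lemma integral_cdfDefect_neg_mul_eq_zero (hJ : IsKernel d J) (hJe : ∀ z, J (-z) = J z)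
    (hφ : AEStronglyMeasurable φ) (hφC : ∀ y, |φ y| ≤ C)
    (hφJ : ∀ x, 0 ≤ x → ∫ y, J (x - y) * φ y = φ x) :
    ∫ y, cdfDefect J (-y) * φ y = 0 := by
  set A := ∫ y, cdfDefect J (-y) * φ y
  set M := 2 * C * ∫ t, |cumulativeIntegral (cdfDefect J) t|
  have hconst : ∀ x, 0 ≤ x → ∫ y, cdfDefect J (x - y) * φ y = A := fun x hx => by
    simpa using hJ.integral_cdfDefect_comp_sub_mul_eq hφ hφC (fun z hz => hφJ z hz.1.le) hx
  have hbound : ∀ T, 0 ≤ T → |A| * T ≤ M := by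
    intro T hT
    have hT' := setIntegral_Ioc_integral_comp_sub_mul hJ.integrable_cdfDefect hφ hφC hT
    rw [setIntegral_congr_fun measurableSet_Ioc fun x hx => hconst x hx.1.le, setIntegral_const,
      Real.volume_real_Ioc_of_le hT, smul_eq_mul, sub_zero] at hT'
    calc |A| * T = |T * A| := by rw [abs_mul, abs_of_nonneg hT, mul_comm]
      _ ≤ M := hT' ▸
          abs_integral_sub_mul_le (hJ.integrable_cumulativeIntegral_cdfDefect hJe) hφC 0 T
  by_contra hA
  have hA' : 0 < |A| := abs_pos.2 hA
  have := hbound ((|M| + 1) / |A|) (by positivity)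
  rw [mul_div_cancel₀ _ hA'.ne'] at this
  linarith [le_abs_self M]

lemma integral_cdfDefect_neg_mul_neg (hJ : IsKernel d J) (hφ : AEStronglyMeasurable φ)
    (hφC : ∀ y, |φ y| ≤ C) (hφ0 : ∀ x ∈ Ioo (-d) 0, φ x = 0) {s γ : ℝ} (hs : s < 0)
    (hφs : ∀ y, 0 ≤ y → φ y ≤ s) (hγ : 0 < γ) (hγJ : ∀ z ∈ Icc (-(d / 2)) (-(d / 4)), γ ≤ J z) :
    ∫ y, cdfDefect J (-y) * φ y < 0 := by
  have hd := hJ.pos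
  -- the bound can fail at `y = 0`, where `cdfDefect J 0 ≤ 0` and `φ 0 < 0`
  have hpt : ∀ y ≠ 0,
      cdfDefect J (-y) * φ y ≤ (Ioc 0 (d / 4)).indicator (fun _ => γ * (d / 4) * s) y := by
    intro y hy0
    rcases hy0.lt_or_gt with hy | hy
    · rw [indicator_of_notMem fun h => (h.1.trans hy).false]
      rcases le_or_gt y (-d) with hyd | hyd
      · rw [hJ.cdfDefect_eq_zero fun h => by linarith [h.2], zero_mul]
      · rw [hφ0 y ⟨hyd, hy⟩, mul_zero]
    · have hF := hJ.cumulativeIntegral_nonneg (-y)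
      have hFs := mul_le_mul_of_nonneg_left (hφs y hy.le) hF
      rw [cdfDefect, if_neg (by linarith), sub_zero]
      by_cases hyd : y ≤ d / 4
      · rw [indicator_of_mem (show y ∈ Ioc 0 (d / 4) from ⟨hy, hyd⟩)]
        have := hJ.mul_sub_le_cumulativeIntegral hγJ (by linarith) (by linarith : -(d / 4) ≤ -y)
        nlinarith
      · rw [indicator_of_notMem fun h => hyd h.2]
        nlinarith
  have hint : Integrable fun y => cdfDefect J (-y) * φ y := by
    simpa using integrable_comp_sub_mul hJ.integrable_cdfDefect hφ hφC 0
  have hind : Integrable ((Ioc 0 (d / 4)).indicator fun _ => γ * (d / 4) * s) :=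
    (integrableOn_const measure_Ioc_lt_top.ne).integrable_indicator measurableSet_Ioc
  have hle := integral_mono_ae hint hind (by filter_upwards [volume.ae_ne 0] using hpt)
  rw [integral_indicator_const _ measurableSet_Ioc, Real.volume_real_Ioc_of_le (by linarith),
    smul_eq_mul] at hle
  have : (d / 4 - 0) * (γ * (d / 4) * s) < 0 :=
    mul_neg_of_pos_of_neg (by linarith) (mul_neg_of_pos_of_neg (by positivity) hs)
  linarith

lemma sSup_image_Ici_nonneg (hJ : IsKernel d J) (hJe : ∀ z, J (-z) = J z)
    (hφ : AEStronglyMeasurable φ) (hφC : ∀ y, |φ y| ≤ C)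
    (hφJ : ∀ x, 0 ≤ x → ∫ y, J (x - y) * φ y = φ x) (hφ0 : ∀ x ∈ Ioo (-d) 0, φ x = 0) {γ : ℝ}
    (hγ : 0 < γ) (hγJ : ∀ z ∈ Icc (-(d / 2)) (-(d / 4)), γ ≤ J z) :
    0 ≤ sSup (φ '' Ici 0) := by
  by_contra! hs
  exact (hJ.integral_cdfDefect_neg_mul_neg hφ hφC hφ0 hs
    (fun y hy => le_csSup_image_of_abs_le hφC hy) hγ hγJ).ne
    (hJ.integral_cdfDefect_neg_mul_eq_zero hJe hφ hφC hφJ)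

lemma measure_le_of_integral_eq (hJ : IsKernel d J) (hφ : Measurable φ) (hφC : ∀ y, |φ y| ≤ C)
    (hφ0 : ∀ x ∈ Ioo (-d) 0, φ x = 0) {s γ r c η : ℝ} (hs : 0 ≤ s) (hφs : ∀ y, 0 ≤ y → φ y ≤ s)
    (hγ : 0 < γ) (hγJ : ∀ z ∈ Icc (-r) r, γ ≤ J z) (hη : 0 < η) (hc : 0 ≤ c)
    (hφc : ∫ y, J (c - y) * φ y = φ c) :
    volume {y | 0 ≤ y ∧ |y - c| ≤ r ∧ φ y ≤ s - η} ≤ ENNReal.ofReal ((s - φ c) / (γ * η)) := by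
  set A := {y | 0 ≤ y ∧ |y - c| ≤ r ∧ φ y ≤ s - η}
  have hAm : MeasurableSet A :=
    (measurableSet_le measurable_const measurable_id).inter
      ((measurableSet_le (by fun_prop : Measurable fun y => |y - c|) measurable_const).inter
        (measurableSet_le hφ measurable_const))
  have hAfin : volume A < ⊤ := by
    refine (measure_mono fun y hy => ?_).trans_lt (measure_Icc_lt_top (a := c - r) (b := c + r))
    obtain ⟨h₁, h₂⟩ := abs_le.1 hy.2.1
    exact ⟨by linarith, by linarith⟩
  have hint : Integrable fun y => J (c - y) * (s - φ y) :=
    integrable_comp_sub_mul hJ.integrable (hφ.const_sub s).aestronglyMeasurable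
      (C := |s| + C) (fun y => (abs_sub _ _).trans (by linarith [hφC y])) c
  have hnonneg : ∀ y, 0 ≤ J (c - y) * (s - φ y) := by
    intro y
    rcases le_or_gt 0 y with hy | hy
    · exact mul_nonneg (hJ.nonneg _) (by linarith [hφs y hy])
    rcases le_or_gt y (-d) with hyd | hyd
    · rw [hJ.eq_zero_of_notMem _ fun h => by linarith [h.2], zero_mul]
    · rw [hφ0 y ⟨hyd, hy⟩, sub_zero]
      exact mul_nonneg (hJ.nonneg _) hs
  have htotal : ∫ y, J (c - y) * (s - φ y) = s - φ c := by
    have hJc : Integrable fun y => J (c - y) := hJ.integrable.comp_sub_left c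
    simp_rw [mul_sub]
    rw [integral_sub (hJc.mul_const s) (integrable_comp_sub_mul hJ.integrable
      hφ.aestronglyMeasurable hφC c), integral_mul_const, hφc,
      integral_sub_left_eq_self J volume c, hJ.integral_eq_one, one_mul]
  have hbound : γ * η * volume.real A ≤ s - φ c :=
    calc γ * η * volume.real A ≤ ∫ y in A, J (c - y) * (s - φ y) := by
          refine setIntegral_ge_of_const_le_real hAm hAfin.ne (fun y hy => ?_) hint.integrableOn
          refine mul_le_mul (hγJ _ ?_) (by linarith [hy.2.2]) hη.le (hJ.nonneg _)
          obtain ⟨h₁, h₂⟩ := abs_le.1 hy.2.1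
          exact ⟨by linarith, by linarith⟩
      _ ≤ ∫ y, J (c - y) * (s - φ y) := setIntegral_le_integral hint (ae_of_all _ hnonneg)
      _ = s - φ c := htotal
  rw [← ENNReal.ofReal_toReal hAfin.ne]
  exact ENNReal.ofReal_le_ofReal ((le_div_iff₀' (by positivity)).2 hbound)

end IsKernel

theorem near_sup_measure_estimate
    (d : ℝ) (hd : 0 < d)
    (J : ℝ → ℝ) (hJc : Continuous J) (hJ0 : ∀ z, 0 ≤ J z)
    (hJe : ∀ z, J (-z) = J z)
    (hJs : ∀ z, z ∉ Ioo (-d) d → J z = 0)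
    (hJpos : ∀ z ∈ Ioo (-d) d, 0 < J z)
    (hJ1 : ∫ z, J z = 1)
    (φ : ℝ → ℝ) (hφm : Measurable φ) (hφb : ∃ C, ∀ x, |φ x| ≤ C)
    (hφeq : ∀ x : ℝ, 0 ≤ x → (∫ y, J (x - y) * φ y) = φ x)
    (hφ0 : ∀ x ∈ Ioo (-d) (0 : ℝ), φ x = 0)
    (ε : ℝ) (hε : 0 < ε)
    (φp γ : ℝ) (hφp : φp = sSup (φ '' Ici 0))
    (hγ : γ = sInf (J '' Icc (-(3 * d / 4)) (3 * d / 4)))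
    (hsmall : ε ^ 2 / γ < d / 4)
    (xb : ℝ) (hxb : 0 ≤ xb) (hval : φ xb ≥ φp - ε ^ 4) :
    volume {x : ℝ | 0 ≤ x ∧ |x - xb| < d ∧ φ x ≤ φp - ε} ≤ ENNReal.ofReal (3 * ε / γ) := by
  obtain ⟨C, hφC⟩ := hφb
  have hJ : IsKernel d J := ⟨hJ0, hJs,
    hJc.integrable_of_hasCompactSupport (hasCompactSupport_of_eq_zero_of_notMem_Ioo hJs), hJ1⟩
  have hγ0 : 0 < γ := hγ ▸ sInf_image_Icc_pos hJc hJpos (by linarith) (by linarith)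
  have hγJ : ∀ z ∈ Icc (-(3 * d / 4)) (3 * d / 4), γ ≤ J z := fun z hz =>
    hγ ▸ csInf_le (isCompact_Icc.image hJc).bddBelow (mem_image_of_mem J hz)
  have hφs : ∀ y, 0 ≤ y → φ y ≤ φp := fun y hy => hφp ▸ le_csSup_image_of_abs_le hφC hy
  have hφp0 : 0 ≤ φp := hφp ▸ hJ.sSup_image_Ici_nonneg hJe hφm.aestronglyMeasurable hφC hφeq hφ0
    hγ0 fun z hz => hγJ z ⟨by linarith [hz.1], by linarith [hz.2]⟩
  have hball : ∀ c η, 0 ≤ c → 0 < η → φp - φ c ≤ η ^ 2 →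
      volume {y | 0 ≤ y ∧ |y - c| ≤ 3 * d / 4 ∧ φ y ≤ φp - η} ≤ ENNReal.ofReal (η / γ) := by
    intro c η hc hη hcη
    refine (hJ.measure_le_of_integral_eq hφm hφC hφ0 hφp0 hφs hγ0 hγJ hη hc (hφeq c hc)).trans
      (ENNReal.ofReal_le_ofReal ?_)
    rw [div_le_div_iff₀ (by positivity) hγ0]
    nlinarith
  obtain ⟨c₁, c₂, hc₁, hc₂, hc₁φ, hc₂φ, hcover⟩ :=
    exists_two_centers (P := fun y => φ y ≤ φp - ε ^ 2) hd hxb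
      ((hball xb (ε ^ 2) hxb (by positivity) (by linarith)).trans_lt
        ((ENNReal.ofReal_lt_ofReal_iff (by positivity)).2 hsmall))
  calc volume {x : ℝ | 0 ≤ x ∧ |x - xb| < d ∧ φ x ≤ φp - ε}
      ≤ volume ({y | 0 ≤ y ∧ |y - c₁| ≤ 3 * d / 4 ∧ φ y ≤ φp - ε} ∪
          {y | 0 ≤ y ∧ |y - c₂| ≤ 3 * d / 4 ∧ φ y ≤ φp - ε}) :=
        measure_mono fun x ⟨hx, hxd, hxφ⟩ =>
          (hcover x hx hxd).imp (fun h => ⟨hx, h, hxφ⟩) fun h => ⟨hx, h, hxφ⟩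
    _ ≤ ENNReal.ofReal (ε / γ) + ENNReal.ofReal (ε / γ) := (measure_union_le _ _).trans
        (add_le_add (hball c₁ ε hc₁ hε (by linarith [not_le.1 hc₁φ]))
          (hball c₂ ε hc₂ hε (by linarith [not_le.1 hc₂φ])))
    _ ≤ ENNReal.ofReal (3 * ε / γ) := by
        rw [← ENNReal.ofReal_add (by positivity) (by positivity), ← add_div]
        exact ENNReal.ofReal_le_ofReal (div_le_div_of_nonneg_right (by linarith) hγ0.le)
end

section
/- Let φ be a bounded solution of J*φ = φ on [0,∞) with φ = 0 on (-d,0), and define F(x) = (1/C₀) ∫_0^d ∫_{x-ω}^{x+ω} φ(y) (∫_ω^d J(z) dz) dy dω with C₀ = 2∫_0^d ω (∫_ω^d J(z) dz) dω. Then F''(x) = (1/C₀)((J*φ)(x) - φ(x)) for x ≥ 0; in particular F is affine on [0,∞). -/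
/-!
With `Φ` a primitive of `φ` and `c ω = ∫_ω^d J`, the inner integral of `F` is
`(Φ (x + ω) - Φ (x - ω)) c ω`, so `C₀ F' x = ∫_0^d (φ (x + ω) - φ (x - ω)) c ω dω`. Integrating by
parts in `ω`, with `c d = 0` and `c 0 = 1/2` (evenness of `J` and `∫ J = 1`), turns this into
`∫_0^d (Φ (x + ω) + Φ (x - ω)) J ω dω - Φ x`. Differentiating once more and folding the two halves
of `[-d, d]` together by evenness gives `C₀ F'' = J * φ - φ`, which vanishes on `[0, ∞)`.
-/

open MeasureTheory Set intervalIntegral Function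

theorem hasDerivAt_intervalIntegral_of_continuous_uncurry {G G' : ℝ → ℝ → ℝ} {a b : ℝ}
    (hG : ∀ x, Continuous (G x)) (hG' : Continuous (uncurry G'))
    (hderiv : ∀ x ω, HasDerivAt (fun y => G y ω) (G' x ω) x) (x : ℝ) :
    HasDerivAt (fun y => ∫ ω in a..b, G y ω) (∫ ω in a..b, G' x ω) x := by
  obtain ⟨M, hM⟩ := ((isCompact_closedBall x 1).prod isCompact_uIcc).exists_bound_of_continuousOn
    hG'.continuousOn
  exact (hasDerivAt_integral_of_dominated_loc_of_deriv_le (bound := fun _ => M)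
    (Metric.closedBall_mem_nhds x one_pos) (.of_forall fun y => (hG y).aestronglyMeasurable)
    ((hG x).intervalIntegrable a b) (hG'.comp (Continuous.prodMk_right x)).aestronglyMeasurable
    (.of_forall fun ω hω y hy => hM (y, ω) ⟨hy, uIoc_subset_uIcc hω⟩) intervalIntegrable_const
    (.of_forall fun ω _ y _ => hderiv y ω)).2

theorem integral_eq_intervalIntegral_add_comp_neg {g : ℝ → ℝ} {d : ℝ} (hg : Continuous g)
    (hsupp : support g ⊆ Ioc (-d) d) :
    ∫ z, g z = ∫ ω in (0 : ℝ)..d, (g ω + g (-ω)) := by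
  rw [← integral_eq_integral_of_support_subset hsupp,
    ← integral_add_adjacent_intervals (b := 0) (hg.intervalIntegrable _ _)
      (hg.intervalIntegrable _ _),
    integral_add (hg.intervalIntegrable _ _)
      ((by fun_prop : Continuous fun ω => g (-ω)).intervalIntegrable _ _),
    integral_comp_neg, neg_zero, add_comm]

theorem intervalIntegral_zero_eq_half_of_even {J : ℝ → ℝ} {d : ℝ} (hJ : Continuous J)
    (hJe : ∀ z, J (-z) = J z) (hsupp : support J ⊆ Ioc (-d) d) (hJ1 : ∫ z, J z = 1) :
    ∫ z in (0 : ℝ)..d, J z = 1 / 2 := by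
  rw [integral_eq_intervalIntegral_add_comp_neg hJ hsupp] at hJ1
  simp only [hJe, ← two_mul, intervalIntegral.integral_const_mul] at hJ1
  linarith

theorem integral_comp_sub_mul_eq_of_even {J f : ℝ → ℝ} {d : ℝ} (hJ : Continuous J)
    (hJe : ∀ z, J (-z) = J z) (hsupp : support J ⊆ Ioc (-d) d) (hf : Continuous f) (x : ℝ) :
    ∫ y, J (x - y) * f y = ∫ ω in (0 : ℝ)..d, (f (x + ω) + f (x - ω)) * J ω := by
  have hswap := integral_sub_left_eq_self (fun y => J y * f (x - y)) volume x
  simp only [sub_sub_cancel] at hswap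
  rw [hswap, integral_eq_intervalIntegral_add_comp_neg (by fun_prop)
    ((support_mul_subset_left _ _).trans hsupp)]
  refine integral_congr fun ω _ => ?_
  simp only [hJe, sub_neg_eq_add]
  ring

theorem integral_sub_translates_mul_eq {Φ φ c J : ℝ → ℝ} (hΦ : ∀ t, HasDerivAt Φ (φ t) t)
    (hφ : Continuous φ) (hc : ∀ t, HasDerivAt c (-J t) t) (hJ : Continuous J) (x a b : ℝ) :
    ∫ ω in a..b, (φ (x + ω) - φ (x - ω)) * c ω =
      c b * (Φ (x + b) + Φ (x - b)) - c a * (Φ (x + a) + Φ (x - a)) +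
        ∫ ω in a..b, (Φ (x + ω) + Φ (x - ω)) * J ω := by
  have hv : ∀ ω, HasDerivAt (fun ω => Φ (x + ω) + Φ (x - ω)) (φ (x + ω) - φ (x - ω)) ω :=
    fun ω =>
      (((hΦ _).comp_const_add x ω).add ((hΦ _).comp_const_sub x ω)).congr_deriv
        (sub_eq_add_neg _ _).symm
  have hparts := integral_mul_deriv_eq_deriv_mul (fun ω _ => hc ω) (fun ω _ => hv ω)
    (hJ.neg.intervalIntegrable a b)
    ((by fun_prop : Continuous fun ω => φ (x + ω) - φ (x - ω)).intervalIntegrable a b)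
  simpa only [neg_mul, intervalIntegral.integral_neg, sub_neg_eq_add, mul_comm (c _),
    mul_comm (J _)] using hparts

theorem hasDerivAt_integral_add_translates_mul {Φ φ k : ℝ → ℝ}
    (hΦ : ∀ t, HasDerivAt Φ (φ t) t) (hφ : Continuous φ) (hk : Continuous k) (a b x : ℝ) :
    HasDerivAt (fun x => ∫ ω in a..b, (Φ (x + ω) + Φ (x - ω)) * k ω)
      (∫ ω in a..b, (φ (x + ω) + φ (x - ω)) * k ω) x := by
  have hΦc : Continuous Φ := Differentiable.continuous fun t => (hΦ t).differentiableAt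
  exact hasDerivAt_intervalIntegral_of_continuous_uncurry (by fun_prop) (by fun_prop)
    (fun x ω => (((hΦ _).comp_add_const x ω).add ((hΦ _).comp_sub_const x ω)).mul_const _) x

theorem hasDerivAt_integral_sub_translates_mul_tail {Φ φ J : ℝ → ℝ} {d : ℝ}
    (hΦ : ∀ t, HasDerivAt Φ (φ t) t) (hφ : Continuous φ) (hJ : Continuous J)
    (hJe : ∀ z, J (-z) = J z) (hsupp : support J ⊆ Ioc (-d) d) (hJ1 : ∫ z, J z = 1) (x : ℝ) :
    HasDerivAt (fun x => ∫ ω in (0 : ℝ)..d, (Φ (x + ω) - Φ (x - ω)) * ∫ z in ω..d, J z)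
      ((∫ ω in (0 : ℝ)..d, (Φ (x + ω) + Φ (x - ω)) * J ω) - Φ x) x := by
  set c : ℝ → ℝ := fun ω => ∫ z in ω..d, J z
  have hc : ∀ ω, HasDerivAt c (-J ω) ω := fun ω =>
    integral_hasDerivAt_left (hJ.intervalIntegrable _ _) (hJ.stronglyMeasurableAtFilter _ _)
      hJ.continuousAt
  have hΦc : Continuous Φ := Differentiable.continuous fun t => (hΦ t).differentiableAt
  have hcc : Continuous c := Differentiable.continuous fun t => (hc t).differentiableAt
  have hc0 : c 0 = 1 / 2 := intervalIntegral_zero_eq_half_of_even hJ hJe hsupp hJ1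
  have hcd : c d = 0 := integral_same
  have hparts : ∫ ω in (0 : ℝ)..d, (φ (x + ω) - φ (x - ω)) * c ω =
      (∫ ω in (0 : ℝ)..d, (Φ (x + ω) + Φ (x - ω)) * J ω) - Φ x := by
    rw [integral_sub_translates_mul_eq hΦ hφ hc hJ, hc0, hcd, add_zero, sub_zero]
    ring
  rw [← hparts]
  exact hasDerivAt_intervalIntegral_of_continuous_uncurry
    (G := fun x ω => (Φ (x + ω) - Φ (x - ω)) * c ω) (by fun_prop) (by fun_prop)
    (fun x ω => (((hΦ _).comp_add_const x ω).sub ((hΦ _).comp_sub_const x ω)).mul_const _) x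

theorem exists_affine_of_hasDerivAt_deriv_zero {f f' : ℝ → ℝ} {a : ℝ}
    (hf : ∀ x, a ≤ x → HasDerivAt f (f' x) x) (hf' : ∀ x, a ≤ x → HasDerivAt f' 0 x) :
    ∃ A B : ℝ, ∀ x, a ≤ x → f x = A * x + B := by
  have const_of_deriv_zero : ∀ g : ℝ → ℝ, (∀ x, a ≤ x → HasDerivAt g 0 x) →
      ∀ x, a ≤ x → g x = g a := fun g hg x hx =>
    constant_of_has_deriv_right_zero (fun y hy => (hg y hy.1).continuousAt.continuousWithinAt)
      (fun y hy => (hg y hy.1).hasDerivWithinAt) x ⟨hx, le_rfl⟩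
  have hf'_const := const_of_deriv_zero f' hf'
  have hlin := const_of_deriv_zero (fun x => f x - f' a * x) fun x hx => by
    have h := (hf x hx).sub ((hasDerivAt_id x).const_mul (f' a))
    rwa [hf'_const x hx, mul_one, sub_self] at h
  exact ⟨f' a, f a - f' a * a, fun x hx => by linarith [hlin x hx]⟩

theorem F_second_derivative_general
    (d : ℝ)
    (J : ℝ → ℝ) (hJc : Continuous J)
    (hJe : ∀ z, J (-z) = J z)
    (hJs : ∀ z, z ∉ Ioo (-d) d → J z = 0)
    (hJ1 : ∫ z, J z = 1)
    (φ : ℝ → ℝ) (hφc : Continuous φ)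
    (hφeq : ∀ x : ℝ, 0 ≤ x → (∫ y, J (x - y) * φ y) = φ x)
    (C₀ : ℝ)
    (F : ℝ → ℝ)
    (hF : ∀ x : ℝ, F x =
      (1 / C₀) * ∫ ω in (0 : ℝ)..d, (∫ y in (x - ω)..(x + ω), φ y * ∫ z in ω..d, J z)) :
    (∀ x : ℝ, 0 ≤ x →
      deriv (deriv F) x = (1 / C₀) * ((∫ y, J (x - y) * φ y) - φ x)) ∧
    (∃ A B : ℝ, ∀ x : ℝ, 0 ≤ x → F x = A * x + B) := by
  have hJsupp : support J ⊆ Ioc (-d) d := fun z hz =>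
    Ioo_subset_Ioc_self (not_not.1 (mt (hJs z) hz))
  set Φ : ℝ → ℝ := fun x => ∫ t in (0 : ℝ)..x, φ t
  have hΦ : ∀ t, HasDerivAt Φ (φ t) t := fun t => (hφc.integral_hasStrictDerivAt 0 t).hasDerivAt
  have hFΦ :
      F = fun x => 1 / C₀ * ∫ ω in (0 : ℝ)..d, (Φ (x + ω) - Φ (x - ω)) * ∫ z in ω..d, J z := by
    refine funext fun x => (hF x).trans (congrArg _ (integral_congr fun ω _ => ?_))
    rw [intervalIntegral.integral_mul_const, integral_interval_sub_left
      (hφc.intervalIntegrable _ _) (hφc.intervalIntegrable _ _)]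
  have hF' : ∀ x, HasDerivAt F
      (1 / C₀ * ((∫ ω in (0 : ℝ)..d, (Φ (x + ω) + Φ (x - ω)) * J ω) - Φ x)) x := fun x => by
    rw [hFΦ]
    exact (hasDerivAt_integral_sub_translates_mul_tail hΦ hφc hJc hJe hJsupp hJ1 x).const_mul _
  have hF'' : ∀ x, HasDerivAt (deriv F) (1 / C₀ * ((∫ y, J (x - y) * φ y) - φ x)) x := fun x => by
    rw [funext fun x => (hF' x).deriv, integral_comp_sub_mul_eq_of_even hJc hJe hJsupp hφc]
    exact ((hasDerivAt_integral_add_translates_mul hΦ hφc hJc 0 d x).sub (hΦ x)).const_mul _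
  refine ⟨fun x _ => (hF'' x).deriv, exists_affine_of_hasDerivAt_deriv_zero
    (fun x _ => (hF' x).differentiableAt.hasDerivAt) fun x hx => ?_⟩
  simpa [hφeq x hx] using hF'' x

theorem F_second_derivative
    (d : ℝ) (hd : 0 < d)
    (J : ℝ → ℝ) (hJc : Continuous J) (hJ0 : ∀ z, 0 ≤ J z)
    (hJe : ∀ z, J (-z) = J z)
    (hJs : ∀ z, z ∉ Ioo (-d) d → J z = 0)
    (hJ1 : ∫ z, J z = 1)
    (φ : ℝ → ℝ) (hφc : Continuous φ) (hφb : ∃ C, ∀ x, |φ x| ≤ C)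
    (hφ0 : ∀ x ∈ Ioo (-d) (0 : ℝ), φ x = 0)
    (hφeq : ∀ x : ℝ, 0 ≤ x → (∫ y, J (x - y) * φ y) = φ x)
    (C₀ : ℝ)
    (hC₀ : C₀ = 2 * ∫ ω in (0 : ℝ)..d, ω * ∫ z in ω..d, J z)
    (F : ℝ → ℝ)
    (hF : ∀ x : ℝ, F x =
      (1 / C₀) * ∫ ω in (0 : ℝ)..d, (∫ y in (x - ω)..(x + ω), φ y * ∫ z in ω..d, J z)) :
    (∀ x : ℝ, 0 ≤ x →
      deriv (deriv F) x = (1 / C₀) * ((∫ y, J (x - y) * φ y) - φ x)) ∧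
    (∃ A B : ℝ, ∀ x : ℝ, 0 ≤ x → F x = A * x + B) :=
  F_second_derivative_general d J hJc hJe hJs hJ1 φ hφc hφeq C₀ F hF
end

section
/- For z(x) = (x+2d)^γ with 0 < γ < 1 and J smooth, nonnegative, even, supported in (-d,d) with second moment 2𝔮 = ∫ J(z)z² dz, the nonlocal operator satisfies Lz(x) = (J*z)(x) - z(x) ≤ -(𝔮 γ(1-γ)/2)(x+3d)^{γ-2} for all x ≥ 0. -/
open MeasureTheory Set

lemma taylor_key (d γ x u : ℝ) (hd : 0 < d) (hγ0 : 0 < γ) (hγ1 : γ < 1) (hx : 0 ≤ x)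
    (hu : u ∈ Ioo (-d) d) :
    (x - u + 2*d) ^ γ ≤ (x + 2*d) ^ γ - γ * (x + 2*d) ^ (γ-1) * u
      + (γ * (γ-1) * (x + 3*d) ^ (γ-2)) / 2 * u ^ 2 := by
  set C := γ * (γ-1) * (x + 3*d) ^ (γ-2) with hC
  set w : ℝ → ℝ := fun t => (t + 2*d) ^ γ - C/2 * (t - x)^2 with hw
  set w1 : ℝ → ℝ := fun t => γ * (t + 2*d) ^ (γ-1) - C * (t - x) with hw1
  have h3d : (0:ℝ) < x + 3*d := by linarith
  have hderiv : ∀ t ∈ Icc (x-d) (x+d), HasDerivAt w (w1 t) t := by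
    intro t ht
    have htpos : 0 < t + 2*d := by have := ht.1; linarith
    have h1 : HasDerivAt (fun t : ℝ => (t + 2*d) ^ γ) (γ * (t + 2*d) ^ (γ-1)) t := by
      have := (Real.hasDerivAt_rpow_const (p := γ) (x := t + 2*d) (Or.inl htpos.ne')).comp t
        ((hasDerivAt_id t).add_const (2*d))
      simp only [mul_one] at this
      exact this
    have h2 : HasDerivAt (fun t : ℝ => C/2 * (t - x)^2) (C * (t - x)) t := by
      have h := (((hasDerivAt_id t).sub_const x).pow 2).const_mul (C/2)
      simp only [id_eq, pow_one, Nat.cast_ofNat, mul_one] at h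
      exact h.congr_deriv (by rw [show (2:ℕ) - 1 = 1 from rfl, pow_one]; ring)
    exact h1.sub h2
  have hderiv2 : ∀ t ∈ Ioo (x-d) (x+d), HasDerivAt w1 (γ * (γ-1) * (t + 2*d) ^ (γ-2) - C) t := by
    intro t ht
    have htpos : 0 < t + 2*d := by have := ht.1; linarith
    have h1 : HasDerivAt (fun t : ℝ => γ * (t + 2*d) ^ (γ-1)) (γ * ((γ-1) * (t + 2*d) ^ (γ-2))) t := by
      have := ((Real.hasDerivAt_rpow_const (p := γ-1) (x := t + 2*d) (Or.inl htpos.ne')).comp t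
        ((hasDerivAt_id t).add_const (2*d))).const_mul γ
      simpa [show γ - 1 - 1 = γ - 2 from by ring] using this
    have h2 : HasDerivAt (fun t : ℝ => C * (t - x)) C t := by
      simpa using ((hasDerivAt_id t).sub_const x).const_mul C
    have := h1.sub h2
    exact this.congr_deriv (by ring)
  have hconc : ConcaveOn ℝ (Icc (x-d) (x+d)) w := by
    apply concaveOn_of_hasDerivWithinAt2_nonpos (f' := w1)
      (f'' := fun t => γ * (γ-1) * (t + 2*d) ^ (γ-2) - C) (convex_Icc _ _)
    · exact fun t ht => (hderiv t ht).continuousAt.continuousWithinAt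
    · rw [interior_Icc]
      exact fun t ht => (hderiv t (Ioo_subset_Icc_self ht)).hasDerivWithinAt
    · rw [interior_Icc]
      exact fun t ht => (hderiv2 t ht).hasDerivWithinAt
    · rw [interior_Icc]
      intro t ht
      have htpos : 0 < t + 2*d := by have := ht.1; linarith
      have hle : (x + 3*d) ^ (γ-2) ≤ (t + 2*d) ^ (γ-2) := by
        apply Real.rpow_le_rpow_of_nonpos htpos (by have := ht.2; linarith) (by linarith)
      have hneg : γ * (γ-1) ≤ 0 := mul_nonpos_of_nonneg_of_nonpos hγ0.le (by linarith)
      have : γ * (γ-1) * (t + 2*d) ^ (γ-2) ≤ γ * (γ-1) * (x + 3*d) ^ (γ-2) :=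
        mul_le_mul_of_nonpos_left hle hneg
      simpa [hC] using sub_nonpos.mpr this
  have hxmem : x ∈ Icc (x-d) (x+d) := by constructor <;> linarith
  have humem : x - u ∈ Icc (x-d) (x+d) := by
    obtain ⟨h1, h2⟩ := hu; constructor <;> linarith
  have hwx : w1 x = γ * (x + 2*d) ^ (γ-1) := by simp [hw1]
  have htang : w (x - u) ≤ w x + w1 x * (-u) := by
    rcases lt_trichotomy u 0 with h | h | h
    · have hlt : x < x - u := by linarith
      have := hconc.slope_le_of_hasDerivAt hxmem humem hlt (hderiv x hxmem)
      rw [slope_def_field] at this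
      have h' : x - u - x = -u := by ring
      rw [h'] at this
      have hpos : (0:ℝ) < -u := by linarith
      have h2 := mul_le_mul_of_nonneg_right this hpos.le
      rw [div_mul_cancel₀ _ hpos.ne'] at h2
      linarith
    · simp [h]
    · have hlt : x - u < x := by linarith
      have := hconc.le_slope_of_hasDerivAt humem hxmem hlt (hderiv x hxmem)
      rw [slope_def_field] at this
      have h' : x - (x - u) = u := by ring
      rw [h'] at this
      -- this : w1 x ≤ (w x - w (x-u)) / u
      have := mul_le_mul_of_nonneg_right this h.le
      rw [div_mul_cancel₀ _ h.ne'] at this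
      linarith
  have hx0 : x - x = 0 := by ring
  simp only [hw, hwx] at htang
  have e1 : x - u - x = -u := by ring
  rw [e1, hx0] at htang
  ring_nf at htang ⊢
  nlinarith [htang]

theorem nonlocal_op_on_power
    (d γ : ℝ) (hd : 0 < d) (hγ0 : 0 < γ) (hγ1 : γ < 1)
    (J : ℝ → ℝ) (hJsm : ContDiff ℝ (⊤ : ℕ∞) J) (hJ0 : ∀ z, 0 ≤ J z)
    (hJe : ∀ z, J (-z) = J z)
    (hJs : ∀ z, z ∉ Ioo (-d) d → J z = 0)
    (hJ1 : ∫ z, J z = 1)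
    (q : ℝ) (hq : q = (1/2) * ∫ z, J z * z ^ 2) :
    ∀ x : ℝ, 0 ≤ x →
      (∫ y, J (x - y) * (y + 2 * d) ^ γ) - (x + 2 * d) ^ γ ≤
        -(q * γ * (1 - γ) / 2) * (x + 3 * d) ^ (γ - 2) := by
  intro x hx
  have h3d : (0:ℝ) < x + 3*d := by linarith
  set A := (x + 2*d) ^ γ with hA
  set B := γ * (x + 2*d) ^ (γ-1) with hB
  set C := γ * (γ-1) * (x + 3*d) ^ (γ-2) with hC
  have hJc : Continuous J := hJsm.continuous
  have hJsupp : HasCompactSupport J := by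
    have hsub : tsupport J ⊆ Icc (-d) d := by
      apply closure_minimal _ isClosed_Icc
      intro u hu
      by_contra h
      exact hu (hJs u (fun h' => h (Ioo_subset_Icc_self h')))
    exact IsCompact.of_isClosed_subset isCompact_Icc (isClosed_tsupport J) hsub
  -- integrability of all pieces
  have hcabs : Continuous (fun u : ℝ => |x - u + 2*d| ^ γ) := by
    apply Continuous.rpow_const
    · exact ((continuous_const.sub continuous_id).add continuous_const).abs
    · exact fun u => Or.inr hγ0.le
  have hint1 : Integrable (fun u : ℝ => J u * |x - u + 2*d| ^ γ) :=
    (hJc.mul hcabs).integrable_of_hasCompactSupport hJsupp.mul_right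
  have hcpoly : Continuous (fun u : ℝ => A - B*u + C/2*u^2) := by continuity
  have hint2 : Integrable (fun u : ℝ => J u * (A - B*u + C/2*u^2)) :=
    (hJc.mul hcpoly).integrable_of_hasCompactSupport hJsupp.mul_right
  have hintJ : Integrable J := hJc.integrable_of_hasCompactSupport hJsupp
  have hintu : Integrable (fun u : ℝ => J u * u) :=
    (hJc.mul continuous_id).integrable_of_hasCompactSupport hJsupp.mul_right
  have hintu2 : Integrable (fun u : ℝ => J u * u^2) :=
    (hJc.mul (continuous_pow 2)).integrable_of_hasCompactSupport hJsupp.mul_right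
  -- q nonneg
  have hqnn : 0 ≤ q := by
    rw [hq]
    have : 0 ≤ ∫ z, J z * z ^ 2 :=
      integral_nonneg fun z => mul_nonneg (hJ0 z) (sq_nonneg z)
    linarith
  -- change of variables
  have key : (∫ y, J (x - y) * (y + 2 * d) ^ γ) = ∫ u, J u * |x - u + 2*d| ^ γ := by
    rw [← integral_sub_left_eq_self (fun u : ℝ => J u * |x - u + 2*d| ^ γ) volume x]
    congr 1
    funext y
    by_cases hy : J (x - y) = 0
    · simp [hy]
    · have hmem : x - y ∈ Ioo (-d) d := by
        by_contra h; exact hy (hJs _ h)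
      have h1 : x - (x - y) + 2*d = y + 2*d := by ring
      have h2 : 0 < y + 2*d := by have := hmem.2; linarith
      simp only [h1, abs_of_pos h2]
  -- pointwise bound
  have hpt : ∀ u : ℝ, J u * |x - u + 2*d| ^ γ ≤ J u * (A - B*u + C/2*u^2) := by
    intro u
    by_cases hu : J u = 0
    · simp [hu]
    · have hmem : u ∈ Ioo (-d) d := by by_contra h; exact hu (hJs _ h)
      have h1 : 0 < x - u + 2*d := by have := hmem.2; linarith
      rw [abs_of_pos h1]
      apply mul_le_mul_of_nonneg_left _ (hJ0 u)
      simpa [hA, hB, hC, div_mul_eq_mul_div] using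
        taylor_key d γ x u hd hγ0 hγ1 hx hmem
  -- value of the majorant integral
  have hodd : (∫ u : ℝ, J u * u) = 0 := by
    have h1 : (∫ u : ℝ, J (-u) * (-u)) = ∫ u : ℝ, J u * u :=
      integral_neg_eq_self (fun u : ℝ => J u * u) volume
    have h2 : (∫ u : ℝ, J (-u) * (-u)) = -∫ u : ℝ, J u * u := by
      rw [← integral_neg]
      congr 1; funext u; rw [hJe]; ring
    linarith [h1.symm.trans h2]
  have hmaj : (∫ u : ℝ, J u * (A - B*u + C/2*u^2)) = A + C * q := by
    have e : (fun u : ℝ => J u * (A - B*u + C/2*u^2))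
        = fun u : ℝ => A * J u - B * (J u * u) + C/2 * (J u * u^2) := by
      funext u; ring
    have hsub : Integrable (fun u : ℝ => A * J u - B * (J u * u)) volume :=
      (hintJ.const_mul A).sub (hintu.const_mul B)
    have hcm : Integrable (fun u : ℝ => C/2 * (J u * u^2)) volume := hintu2.const_mul (C/2)
    rw [e, integral_add hsub hcm,
      integral_sub (hintJ.const_mul A) (hintu.const_mul B),
      integral_const_mul, integral_const_mul, integral_const_mul, hJ1, hodd]
    have : (∫ u : ℝ, J u * u^2) = 2 * q := by rw [hq]; ring
    rw [this]; ring
  have hle : (∫ u : ℝ, J u * |x - u + 2*d| ^ γ) ≤ A + C * q := by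
    rw [← hmaj]
    exact integral_mono hint1 hint2 hpt
  rw [key]
  have hrp : 0 < (x + 3*d) ^ (γ - 2) := Real.rpow_pos_of_pos h3d _
  have hfin : C * q ≤ -(q * γ * (1 - γ) / 2) * (x + 3 * d) ^ (γ - 2) := by
    rw [hC]
    nlinarith [mul_pos (mul_pos hγ0 (show (0:ℝ) < 1 - γ by linarith)) hrp,
      mul_nonneg (mul_nonneg (mul_nonneg hqnn hγ0.le) (show (0:ℝ) ≤ 1 - γ by linarith)) hrp.le]
  linarith
end
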